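/- arXiv:2006.12949 — 3 statements merged into one kernel-verified Lean document; each statement's English description precedes it below -/
import Mathlib

section
/- Strict convexity is equivalent to uniqueness of the maximizer in the Legendre transform: let q' ∈ (1,∞), C > 0, and let ℓ : ℝ^d → ℝ be differentiable and coercive in the sense that ℓ(α) ≥ C⁻¹|α|^{q'} − C for all α ∈ ℝ^d. Then ℓ is strictly convex if and only if for every p ∈ ℝ^d the function α ↦ −p·α − ℓ(α) attains its supremum over ℝ^d at exactly one point. -/
/-! A strictly convex `ℓ` makes `α ↦ ⟪p, α⟫ - ℓ α` strictly concave, so it has at most one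
maximizer, and superlinear growth provides one. Conversely, suppose every slope `p` has a unique
maximizer `m p`. Maximizers stay bounded for bounded `p`, so compactness and uniqueness make `m`
continuous; then the Legendre transform `ℓ* p = ⟪p, m p⟫ - ℓ (m p)` has one-sided directional
derivatives `⟪v, m p⟫` (Danskin). Since `ℓ*` grows at least like `‖p‖`, the function
`ℓ* p - ⟪p, γ⟫` has a minimizer `p₀`, where the first-order condition reads `m p₀ = γ`. So every
point `γ` is the unique maximizer for some slope, i.e. `ℓ` has a strict supporting hyperplane at
every point, which is strict convexity. -/

open MeasureTheory Real Set
open scoped InnerProductSpace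

noncomputable section

abbrev E (d : ℕ) : Type := EuclideanSpace ℝ (Fin d)

open Filter Topology

theorem strictConvexOn_univ_iff {F : Type*} [AddCommGroup F] [Module ℝ F] {f : F → ℝ} :
    StrictConvexOn ℝ univ f ↔ ∀ α β : F, α ≠ β → ∀ lam : ℝ, lam ∈ Ioo (0 : ℝ) 1 →
      f (lam • α + (1 - lam) • β) < lam * f α + (1 - lam) * f β := by
  constructor
  · rintro hf α β hne lam ⟨h0, h1⟩
    exact hf.2 trivial trivial hne h0 (sub_pos.2 h1) (by ring)
  · refine fun hf => ⟨convex_univ, fun α _ β _ hne a b ha hb hab => ?_⟩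
    obtain rfl : b = 1 - a := by linarith
    exact hf α β hne a ⟨ha, by linarith⟩

section Legendre

variable {F : Type*}

def SuperlinearGrowth [Norm F] (ℓ : F → ℝ) : Prop :=
  ∀ K : ℝ, ∃ R, ∀ x : F, R ≤ ‖x‖ → K * ‖x‖ ≤ ℓ x

theorem superlinearGrowth_of_rpow_le [Norm F] {q' C : ℝ} (hq' : 1 < q') (hC : 0 < C)
    {ℓ : F → ℝ} (hℓ : ∀ x, C⁻¹ * ‖x‖ ^ q' - C ≤ ℓ x) : SuperlinearGrowth ℓ := by
  intro K
  obtain ⟨R, hR⟩ := eventually_atTop.1 <|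
    (tendsto_rpow_atTop (sub_pos.2 hq')).eventually_ge_atTop (C * (|K| + C))
  refine ⟨max R 1, fun x hx => ?_⟩
  set t := ‖x‖
  have ht : 1 ≤ t := le_of_max_le_right hx
  have hpow : t ^ q' = t ^ (q' - 1) * t := by
    rw [Real.rpow_sub_one (by positivity), div_mul_cancel₀ _ (by positivity)]
  have hlin : (|K| + C) * t ≤ C⁻¹ * t ^ q' := by
    calc (|K| + C) * t = C⁻¹ * (C * (|K| + C)) * t := by field_simp
      _ ≤ C⁻¹ * t ^ (q' - 1) * t := by gcongr; exact hR t (le_of_max_le_left hx)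
      _ = C⁻¹ * t ^ q' := by rw [hpow, mul_assoc]
  nlinarith [hℓ x, le_abs_self K, abs_nonneg K]

variable [NormedAddCommGroup F] [InnerProductSpace ℝ F] {ℓ : F → ℝ} {m : F → F}

theorem SuperlinearGrowth.exists_inner_sub_le_neg_norm (h : SuperlinearGrowth ℓ) (K : ℝ) :
    ∃ R, ∀ p y : F, ‖p‖ ≤ K → R ≤ ‖y‖ → ⟪p, y⟫_ℝ - ℓ y ≤ -‖y‖ := by
  obtain ⟨R, hR⟩ := h (K + 1)
  refine ⟨R, fun p y hp hy => ?_⟩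
  have := hR y hy
  nlinarith [real_inner_le_norm p y, mul_le_mul_of_nonneg_right hp (norm_nonneg y)]

theorem SuperlinearGrowth.tendsto_inner_sub_cocompact [ProperSpace F] (h : SuperlinearGrowth ℓ)
    (p : F) : Tendsto (fun y => ⟪p, y⟫_ℝ - ℓ y) (cocompact F) atBot := by
  obtain ⟨R, hR⟩ := h.exists_inner_sub_le_neg_norm ‖p‖
  refine tendsto_atBot_mono' _ ?_ (tendsto_neg_atTop_atBot.comp tendsto_norm_cocompact_atTop)
  filter_upwards [tendsto_norm_cocompact_atTop.eventually_ge_atTop R] with y hy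
  exact hR p y le_rfl hy

def IsLegendreMaximizer (ℓ : F → ℝ) (p x : F) : Prop :=
  ∀ y, ⟪p, y⟫_ℝ - ℓ y ≤ ⟪p, x⟫_ℝ - ℓ x

theorem SuperlinearGrowth.exists_isLegendreMaximizer [ProperSpace F] (h : SuperlinearGrowth ℓ)
    (hℓ : Continuous ℓ) (p : F) : ∃ x, IsLegendreMaximizer ℓ p x :=
  ((continuous_const.inner continuous_id).sub hℓ).exists_forall_ge
    (h.tendsto_inner_sub_cocompact p)

theorem SuperlinearGrowth.exists_norm_le_of_isLegendreMaximizer (h : SuperlinearGrowth ℓ)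
    (K : ℝ) : ∃ R, ∀ p x : F, ‖p‖ ≤ K → IsLegendreMaximizer ℓ p x → ‖x‖ ≤ R := by
  obtain ⟨R, hR⟩ := h.exists_inner_sub_le_neg_norm K
  refine ⟨max R (ℓ 0), fun p x hp hx => ?_⟩
  by_cases hxR : R ≤ ‖x‖
  · have h0 := hx 0
    rw [inner_zero_right] at h0
    linarith [hR p x hp hxR, le_max_right R (ℓ 0)]
  · exact (lt_of_not_ge hxR).le.trans (le_max_left _ _)

theorem isClosed_setOf_isLegendreMaximizer (hℓ : Continuous ℓ) :
    IsClosed {z : F × F | IsLegendreMaximizer ℓ z.1 z.2} := by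
  simp only [IsLegendreMaximizer, ofPred_forall]
  exact isClosed_iInter fun y => isClosed_le (by fun_prop) (by fun_prop)

theorem continuous_of_isLegendreMaximizer [ProperSpace F] (h : SuperlinearGrowth ℓ)
    (hℓ : Continuous ℓ) (hm : ∀ p, IsLegendreMaximizer ℓ p (m p))
    (hm_unique : ∀ p x, IsLegendreMaximizer ℓ p x → x = m p) : Continuous m := by
  refine continuous_iff_continuousAt.2 fun p => ?_
  obtain ⟨R, hR⟩ := h.exists_norm_le_of_isLegendreMaximizer (‖p‖ + 1)
  refine (isCompact_closedBall (0 : F) R).tendsto_nhds_of_unique_mapClusterPt ?_ ?_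
  · filter_upwards [Metric.closedBall_mem_nhds p one_pos] with q hq
    rw [mem_closedBall_zero_iff]
    refine hR q (m q) ?_ (hm q)
    linarith [norm_le_norm_add_norm_sub' q p, mem_closedBall_iff_norm.1 hq]
  · rintro x - hx
    obtain ⟨U, hU, hUx⟩ := mapClusterPt_iff_ultrafilter.1 hx
    refine hm_unique p x ((isClosed_setOf_isLegendreMaximizer hℓ).mem_of_tendsto
      (f := fun q => (q, m q)) ((tendsto_id'.2 hU).prodMk_nhds hUx) (.of_forall hm))

theorem eq_of_forall_legendre_sub_inner_le (hm : ∀ p, IsLegendreMaximizer ℓ p (m p))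
    (hmc : Continuous m) {γ p₀ : F}
    (hp₀ : ∀ p, ⟪p₀, m p₀⟫_ℝ - ℓ (m p₀) - ⟪p₀, γ⟫_ℝ ≤ ⟪p, m p⟫_ℝ - ℓ (m p) - ⟪p, γ⟫_ℝ) :
    m p₀ = γ := by
  have hdir : ∀ v, ⟪v, γ⟫_ℝ ≤ ⟪v, m p₀⟫_ℝ := by
    intro v
    have hlim : Tendsto (fun t : ℝ => ⟪v, m (p₀ + t • v)⟫_ℝ) (𝓝[>] 0) (𝓝 ⟪v, m p₀⟫_ℝ) := by
      have hcont : Continuous fun t : ℝ => ⟪v, m (p₀ + t • v)⟫_ℝ := by fun_prop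
      simpa using (hcont.tendsto 0).mono_left nhdsWithin_le_nhds
    refine ge_of_tendsto hlim ?_
    filter_upwards [self_mem_nhdsWithin] with t (ht : 0 < t)
    have h1 := hp₀ (p₀ + t • v)
    have h2 := hm p₀ (m (p₀ + t • v))
    simp only [inner_add_left, real_inner_smul_left] at h1
    exact le_of_mul_le_mul_left (by linarith) ht
  have hself := hdir (γ - m p₀)
  rw [← sub_nonpos, ← inner_sub_right] at hself
  exact (sub_eq_zero.1 (real_inner_self_nonpos.1 hself)).symm

theorem tendsto_legendre_sub_inner_cocompact [ProperSpace F] (hℓ : Continuous ℓ)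
    (hm : ∀ p, IsLegendreMaximizer ℓ p (m p)) (γ : F) :
    Tendsto (fun p => ⟪p, m p⟫_ℝ - ℓ (m p) - ⟪p, γ⟫_ℝ) (cocompact F) atTop := by
  obtain ⟨B, hB⟩ := (isCompact_closedBall γ 1).bddAbove_image hℓ.continuousOn
  refine tendsto_atTop_mono (fun p => ?_)
    (tendsto_atTop_add_const_right _ (-B) tendsto_norm_cocompact_atTop)
  have hu : ‖‖p‖⁻¹ • p‖ ≤ 1 := by
    rw [norm_smul, norm_inv, norm_norm]
    exact inv_mul_le_one_of_le₀ le_rfl (norm_nonneg p)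
  have hpu : ⟪p, ‖p‖⁻¹ • p⟫_ℝ = ‖p‖ := by
    rw [real_inner_smul_right, real_inner_self_eq_norm_sq, sq, ← mul_assoc, inv_mul_mul_self]
  have hBu : ℓ (γ + ‖p‖⁻¹ • p) ≤ B := hB ⟨_, by simpa [dist_eq_norm] using hu, rfl⟩
  have hmax := hm p (γ + ‖p‖⁻¹ • p)
  rw [inner_add_right, hpu] at hmax
  linarith

theorem surjective_of_isLegendreMaximizer [ProperSpace F] (hℓ : Continuous ℓ)
    (hm : ∀ p, IsLegendreMaximizer ℓ p (m p)) (hmc : Continuous m) : Function.Surjective m := by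
  intro γ
  obtain ⟨p₀, hp₀⟩ := Continuous.exists_forall_le (by fun_prop)
    (tendsto_legendre_sub_inner_cocompact hℓ hm γ)
  exact ⟨p₀, eq_of_forall_legendre_sub_inner_le hm hmc hp₀⟩

theorem StrictConvexOn.eq_of_isLegendreMaximizer (hℓ : StrictConvexOn ℝ univ ℓ) {p x y : F}
    (hx : IsLegendreMaximizer ℓ p x) (hy : IsLegendreMaximizer ℓ p y) : x = y :=
  (((innerₛₗ ℝ p).concaveOn convex_univ).sub_strictConvexOn hℓ).eq_of_isMaxOn
    (isMaxOn_univ_iff.2 hx) (isMaxOn_univ_iff.2 hy) trivial trivial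

theorem strictConvexOn_univ_of_forall_exists_strict_max
    (h : ∀ γ, ∃ p : F, ∀ y, y ≠ γ → ⟪p, y⟫_ℝ - ℓ y < ⟪p, γ⟫_ℝ - ℓ γ) :
    StrictConvexOn ℝ univ ℓ := by
  refine ⟨convex_univ, fun x _ y _ hxy a b ha hb hab => ?_⟩
  obtain ⟨p, hp⟩ := h (a • x + b • y)
  have hseg : a • x + b • y ∈ openSegment ℝ x y := ⟨a, b, ha, hb, hab, rfl⟩
  have hx := hp x fun hx => hxy (left_mem_openSegment_iff.1 (by rwa [← hx] at hseg))
  have hy := hp y fun hy => hxy (right_mem_openSegment_iff.1 (by rwa [← hy] at hseg))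
  rw [inner_add_right, real_inner_smul_right, real_inner_smul_right] at hx hy
  obtain rfl : b = 1 - a := by linarith
  simp only [smul_eq_mul]
  nlinarith [mul_lt_mul_of_pos_left hx ha, mul_lt_mul_of_pos_left hy hb]

theorem strictConvexOn_univ_iff_forall_existsUnique_isLegendreMaximizer [ProperSpace F]
    (h : SuperlinearGrowth ℓ) (hℓ : Continuous ℓ) :
    StrictConvexOn ℝ univ ℓ ↔ ∀ p, ∃! x, IsLegendreMaximizer ℓ p x := by
  constructor
  · intro hconv p
    obtain ⟨x, hx⟩ := h.exists_isLegendreMaximizer hℓ p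
    exact ⟨x, hx, fun y hy => hconv.eq_of_isLegendreMaximizer hy hx⟩
  · intro huniq
    choose m hm hm_unique using huniq
    have hmc := continuous_of_isLegendreMaximizer h hℓ hm hm_unique
    refine strictConvexOn_univ_of_forall_exists_strict_max fun γ => ?_
    obtain ⟨p, rfl⟩ := surjective_of_isLegendreMaximizer hℓ hm hmc γ
    exact ⟨p, fun y hy => (hm p y).lt_of_ne fun heq =>
      hy (hm_unique p y fun z => (hm p z).trans heq.ge)⟩

end Legendre

theorem strict_convexity_iff_unique_maximizer_general
    (d : ℕ) (q' C : ℝ) (hq' : 1 < q') (hC : 0 < C)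
    (ℓ : E d → ℝ) (hdiff : Differentiable ℝ ℓ)
    (hcoer : ∀ α : E d, C⁻¹ * ‖α‖ ^ q' - C ≤ ℓ α) :
    (∀ α β : E d, α ≠ β → ∀ lam : ℝ, lam ∈ Ioo (0 : ℝ) 1 →
        ℓ (lam • α + (1 - lam) • β) < lam * ℓ α + (1 - lam) * ℓ β)
      ↔ (∀ p : E d, ∃! α : E d, ∀ β : E d,
          -⟪p, β⟫_ℝ - ℓ β ≤ -⟪p, α⟫_ℝ - ℓ α) := by
  rw [← strictConvexOn_univ_iff, strictConvexOn_univ_iff_forall_existsUnique_isLegendreMaximizer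
    (superlinearGrowth_of_rpow_le hq' hC hcoer) hdiff.continuous, neg_surjective.forall]
  simp only [IsLegendreMaximizer, inner_neg_left]

/-- Strict convexity is equivalent to uniqueness of the maximizer in the
Legendre transform: let `q' ∈ (1,∞)`, `C > 0`, and let `ℓ : ℝ^d → ℝ` be differentiable and
coercive in the sense that `ℓ(α) ≥ C⁻¹|α|^{q'} − C` for all `α`.  Then `ℓ` is strictly convex
(in the sense that `ℓ(λα+(1−λ)β) < λℓ(α)+(1−λ)ℓ(β)` for all `α ≠ β` and `λ ∈ (0,1)`)
if and only if for every `p ∈ ℝ^d` the function `α ↦ −p·α − ℓ(α)` attains its supremum over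
`ℝ^d` at exactly one point. -/
theorem strict_convexity_iff_unique_maximizer
    (d : ℕ) (hd : 1 ≤ d) (q' C : ℝ) (hq' : 1 < q') (hC : 0 < C)
    (ℓ : E d → ℝ) (hdiff : Differentiable ℝ ℓ)
    (hcoer : ∀ α : E d, C⁻¹ * ‖α‖ ^ q' - C ≤ ℓ α) :
    (∀ α β : E d, α ≠ β → ∀ lam : ℝ, lam ∈ Ioo (0 : ℝ) 1 →
        ℓ (lam • α + (1 - lam) • β) < lam * ℓ α + (1 - lam) * ℓ β)
      ↔ (∀ p : E d, ∃! α : E d, ∀ β : E d,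
          -⟪p, β⟫_ℝ - ℓ β ≤ -⟪p, α⟫_ℝ - ℓ α) :=
  strict_convexity_iff_unique_maximizer_general d q' C hq' hC ℓ hdiff hcoer
end
end

section
/- Differentiability of the Hamiltonian in the state variable (envelope theorem) and growth of its x-derivative: let q' ∈ (1,∞), q = q'/(q'−1), C₀ > 0, Λ ≥ 0, and let L : ℝ^d×ℝ^d → ℝ, (x,α) ↦ L(x,α), be differentiable with L and its derivatives L_x, L_α continuous, such that for every (x,p) the function α ↦ −p·α − L(x,α) attains its supremum at a unique point α*(x,p), and such that for all (x,α): C₀⁻¹|α|^{q'} − C₀(1+Λ^{q'}) ≤ L(x,α), |L(x,α)| ≤ C₀(1+|α|^{q'}+Λ^{q'}), and |L_x(x,α)| ≤ C₀(1+|α|^{q'}+Λ^{q'}). Then H(x,p) := sup_{α∈ℝ^d}(−p·α − L(x,α)) is differentiable with respect to x, with ∇_x H(x,p) = −L_x(x, α*(x,p)), and there is a constant C̃₀ > 0 depending only on C₀ and q such that |∇_x H(x,p)| ≤ C̃₀(1+|p|^{q}+Λ^{q'}) for all (x,p). -/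
open MeasureTheory Real Set
open scoped InnerProductSpace

noncomputable section

/-- The derivative of a function of `(x,α)` with partial gradients `vx` (in `x`) and
`vα` (in `α`), as a continuous linear map on the product space. -/
def pairD (d : ℕ) (vx vα : E d) : (E d × E d) →L[ℝ] ℝ :=
  ((innerSL ℝ vx).comp (ContinuousLinearMap.fst ℝ (E d) (E d))) +
  ((innerSL ℝ vα).comp (ContinuousLinearMap.snd ℝ (E d) (E d)))

/-! Write `f y α = -⟪p, α⟫ - L y α` and `a y = astar y p`, so that `H y = f y (a y)`. Testing the
maximality of `a x` and of `a y` against each other gives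
`f y (a x) - f x (a x) ≤ H y - H x ≤ f y (a y) - f x (a y)`,
and by the mean value inequality both bounds are `-⟪Lx x (a x), y - x⟫ + o(‖y - x‖)`, because `Lx`
is continuous and `a y → a x`. This continuity follows from the uniqueness of the maximiser, since
coercivity and Young's inequality confine all maximisers to one ball:
`‖a y‖ ^ q' ≲ 1 + ‖p‖ ^ q + Λ ^ q'`. The same bound inserted in the growth of `Lx` bounds the
gradient. -/

open Filter Topology Function

theorem ContinuousAt.of_forall_le_of_unique {X A : Type*} [TopologicalSpace X]
    [TopologicalSpace A] {f : X → A → ℝ} (hf : Continuous (uncurry f)) {a : X → A} {K : Set A}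
    (hK : IsCompact K) (haK : ∀ y, a y ∈ K) (hmax : ∀ y β, f y β ≤ f y (a y)) {x : X}
    (huniq : ∀ α, (∀ β, f x β ≤ f x α) → α = a x) :
    ContinuousAt a x := by
  refine hK.tendsto_nhds_of_unique_mapClusterPt (.of_forall haK) fun β _ hβ ↦ huniq β fun β' ↦ ?_
  by_contra! hlt
  obtain ⟨U, hU, V, hV, hUV⟩ := mem_nhds_prod_iff.1 <|
    (isOpen_lt hf (hf.comp (continuous_fst.prodMk continuous_const))).mem_nhds hlt
  obtain ⟨y, hyV, hyU⟩ := ((hβ.frequently hV).and_eventually hU).exists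
  exact (hUV (mk_mem_prod hyU hyV)).not_ge (hmax y β')

theorem eventually_norm_sub_sub_le_of_continuousAt {F A G : Type*} [NormedAddCommGroup F]
    [NormedSpace ℝ F] [TopologicalSpace A] [NormedAddCommGroup G] [NormedSpace ℝ G]
    {f : F → A → G} {f' : F → A → F →L[ℝ] G}
    (hf : ∀ y α, HasFDerivAt (fun z ↦ f z α) (f' y α) y) {x : F} {α₀ : A}
    (hf' : ContinuousAt (uncurry f') (x, α₀)) {ε : ℝ} (hε : 0 < ε) :
    ∀ᶠ z in 𝓝 (x, α₀), ‖f z.1 z.2 - f x z.2 - f' x α₀ (z.1 - x)‖ ≤ ε * ‖z.1 - x‖ := by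
  obtain ⟨U, hU, V, hV, hUV⟩ := mem_nhds_prod_iff.1 (hf' (Metric.closedBall_mem_nhds _ hε))
  obtain ⟨r, hr, hrU⟩ := Metric.mem_nhds_iff.1 hU
  filter_upwards [prod_mem_nhds (Metric.ball_mem_nhds x hr) hV] with ⟨y, α⟩ ⟨hy, hα⟩
  refine (convex_ball x r).norm_image_sub_le_of_norm_hasFDerivWithin_le'
    (fun z _ ↦ (hf z α).hasFDerivWithinAt) (fun z hz ↦ ?_) (Metric.mem_ball_self hr) hy
  simpa [dist_eq_norm] using hUV (mk_mem_prod (hrU hz) hα)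

theorem HasFDerivAt.of_forall_le {F A : Type*} [NormedAddCommGroup F] [NormedSpace ℝ F]
    [TopologicalSpace A] {f : F → A → ℝ} {f' : F → A → F →L[ℝ] ℝ} {a : F → A} {x : F}
    (hmax : ∀ y β, f y β ≤ f y (a y)) (hf : ∀ y α, HasFDerivAt (fun z ↦ f z α) (f' y α) y)
    (hf' : ContinuousAt (uncurry f') (x, a x)) (ha : ContinuousAt a x) :
    HasFDerivAt (fun y ↦ f y (a y)) (f' x (a x)) x := by
  refine .of_isLittleO <| Asymptotics.isLittleO_iff.2 fun ε hε ↦ ?_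
  have happrox := eventually_norm_sub_sub_le_of_continuousAt hf hf' hε
  filter_upwards [(continuousAt_id.prodMk continuousAt_const).eventually happrox,
    (continuousAt_id.prodMk ha).eventually happrox] with y hfix hmove
  simp only [id, Real.norm_eq_abs, abs_le] at hfix hmove ⊢
  have := hmax y (a x)
  have := hmax x (a y)
  constructor <;> linarith [hfix.1, hmove.2]

theorem ciSup_eq_of_forall_le {ι : Type*} {f : ι → ℝ} {i : ι} (h : ∀ j, f j ≤ f i) :
    ⨆ j, f j = f i :=
  IsGreatest.csSup_eq ⟨Set.mem_range_self i, Set.forall_mem_range.2 h⟩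

theorem hasGradientAt_iSup_neg_inner_sub {F : Type*} [NormedAddCommGroup F]
    [InnerProductSpace ℝ F] [ProperSpace F] {L : F → F → ℝ} {Lx : F → F → F} {a : F → F}
    {p x : F} {R : ℝ} (hL : ∀ y α, HasGradientAt (fun z ↦ L z α) (Lx y α) y)
    (hLc : Continuous (uncurry L)) (hLxc : Continuous (uncurry Lx))
    (hmax : ∀ y β, -⟪p, β⟫_ℝ - L y β ≤ -⟪p, a y⟫_ℝ - L y (a y))
    (huniq : ∀ α, (∀ β, -⟪p, β⟫_ℝ - L x β ≤ -⟪p, α⟫_ℝ - L x α) → α = a x)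
    (hR : ∀ y, ‖a y‖ ≤ R) :
    HasGradientAt (fun y ↦ ⨆ α, -⟪p, α⟫_ℝ - L y α) (-Lx x (a x)) x := by
  have ha : ContinuousAt a x :=
    .of_forall_le_of_unique (f := fun y α ↦ -⟪p, α⟫_ℝ - L y α)
      ((continuous_const.inner continuous_snd).neg.sub hLc) (isCompact_closedBall 0 R)
      (fun y ↦ mem_closedBall_zero_iff.2 (hR y)) hmax huniq
  have henv := HasFDerivAt.of_forall_le hmax
    (fun y α ↦ (hasGradientAt_iff_hasFDerivAt.1 (hL y α)).const_sub (-⟪p, α⟫_ℝ))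
    ((InnerProductSpace.toDual ℝ F).continuous.comp hLxc).neg.continuousAt ha
  rw [funext fun y ↦ ciSup_eq_of_forall_le (hmax y), hasGradientAt_iff_hasFDerivAt, map_neg]
  exact henv

theorem hasGradientAt_left_of_hasFDerivAt_pairD {d : ℕ} {L : E d → E d → ℝ} {x α vx vα : E d}
    (h : HasFDerivAt (fun z : E d × E d ↦ L z.1 z.2) (pairD d vx vα) (x, α)) :
    HasGradientAt (fun y ↦ L y α) vx x := by
  have hinl : (pairD d vx vα).comp (ContinuousLinearMap.inl ℝ (E d) (E d))
      = InnerProductSpace.toDual ℝ (E d) vx := by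
    ext w
    simp [pairD]
  have hcomp := h.comp x (hasFDerivAt_prodMk_left (𝕜 := ℝ) x α)
  rw [hinl] at hcomp
  exact hasGradientAt_iff_hasFDerivAt.2 hcomp

theorem Real.mul_le_rpow_mul_add_rpow_div {r s a b c : ℝ} (hrs : r.HolderConjugate s)
    (ha : 0 ≤ a) (hb : 0 ≤ b) (hc : 0 < c) :
    a * b ≤ c ^ (s / r) * a ^ s + b ^ r / c := by
  set t := c ^ (1 / r)
  have ht : 0 < t := rpow_pos_of_pos hc _
  have hts : t ^ s = c ^ (s / r) := by rw [← rpow_mul hc.le]; ring_nf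
  have htr : t ^ r = c := by rw [← rpow_mul hc.le, one_div_mul_cancel hrs.ne_zero, rpow_one]
  have hyoung := young_inequality_of_nonneg (mul_nonneg ht.le ha) (div_nonneg hb ht.le) hrs.symm
  have hab : t * a * (b / t) = a * b := by field_simp
  rw [mul_rpow ht.le ha, div_rpow hb ht.le, hts, htr, hab] at hyoung
  have hs : c ^ (s / r) * a ^ s / s ≤ c ^ (s / r) * a ^ s :=
    div_le_self (by positivity) hrs.symm.lt.le
  have hr : b ^ r / c / r ≤ b ^ r / c := div_le_self (by positivity) hrs.lt.le
  linarith

theorem Real.le_max_one_of_rpow_le {s r R : ℝ} (hr : 1 ≤ r) (h : s ^ r ≤ R) : s ≤ max 1 R := by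
  rcases le_total s 1 with hs | hs
  · exact hs.trans (le_max_left _ _)
  · exact (self_le_rpow_of_one_le hs hr).trans (h.trans (le_max_right _ _))

theorem rpow_norm_le_of_forall_inner_sub_le {F : Type*} [NormedAddCommGroup F]
    [InnerProductSpace ℝ F] {q' q C M : ℝ} (hq : q'.HolderConjugate q) (hC : 0 < C)
    {ℓ : F → ℝ} {p α : F} (hmax : ∀ β, -⟪p, β⟫_ℝ - ℓ β ≤ -⟪p, α⟫_ℝ - ℓ α)
    (hcoer : C⁻¹ * ‖α‖ ^ q' - M ≤ ℓ α) (h0 : ℓ 0 ≤ M) :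
    ‖α‖ ^ q' ≤ 4 * C * M + 2 * C * (2 * C) ^ (q / q') * ‖p‖ ^ q := by
  have hinner : -⟪p, α⟫_ℝ ≤ ‖p‖ * ‖α‖ := (neg_le_abs _).trans (abs_real_inner_le_norm p α)
  have hyoung := mul_le_rpow_mul_add_rpow_div hq (norm_nonneg p) (norm_nonneg α)
    (by positivity : 0 < 2 * C)
  have h0max := hmax 0
  rw [inner_zero_right] at h0max
  have hhalf : C⁻¹ * ‖α‖ ^ q' - ‖α‖ ^ q' / (2 * C) = ‖α‖ ^ q' / (2 * C) := by
    field_simp; ring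
  have : ‖α‖ ^ q' / (2 * C) ≤ 2 * M + (2 * C) ^ (q / q') * ‖p‖ ^ q := by linarith
  rw [div_le_iff₀ (by positivity)] at this
  linarith

/-- Differentiability of the Hamiltonian in the state variable (envelope
theorem) and growth of its `x`-derivative: let `q' ∈ (1,∞)`, `q = q'/(q'−1)`, `C₀ > 0`.
There is a constant `C̃₀ > 0` depending only on `C₀` and `q` such that: for every `Λ ≥ 0` and
every `L : ℝ^d×ℝ^d → ℝ` differentiable (with derivatives `L_x`, `L_α`), with `L, L_x, L_α`
continuous, such that for every `(x,p)` the map `α ↦ −p·α − L(x,α)` attains its supremum at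
the unique point `α*(x,p)`, and with the stated coercivity/growth bounds, the Hamiltonian
`H(x,p) = sup_α(−p·α − L(x,α))` is differentiable in `x` with
`∇_x H(x,p) = −L_x(x,α*(x,p))` and `|∇_x H(x,p)| ≤ C̃₀(1+|p|^q+Λ^{q'})`. -/
theorem hamiltonian_x_derivative
    (q' q C0 : ℝ) (hq' : 1 < q') (hq : q = q' / (q' - 1)) (hC0 : 0 < C0) :
    ∃ Ct : ℝ, 0 < Ct ∧
      ∀ (d : ℕ), 1 ≤ d → ∀ (Λ : ℝ), 0 ≤ Λ →
      ∀ (L : E d → E d → ℝ) (Lx Lα : E d → E d → E d) (astar : E d → E d → E d),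
        (∀ x α : E d, HasFDerivAt (fun z : E d × E d => L z.1 z.2)
            (pairD d (Lx x α) (Lα x α)) (x, α)) →
        Continuous (fun z : E d × E d => (L z.1 z.2, Lx z.1 z.2, Lα z.1 z.2)) →
        (∀ x p : E d,
          (∀ β : E d, -⟪p, β⟫_ℝ - L x β ≤ -⟪p, astar x p⟫_ℝ - L x (astar x p)) ∧
          (∀ α : E d, (∀ β : E d, -⟪p, β⟫_ℝ - L x β ≤ -⟪p, α⟫_ℝ - L x α) → α = astar x p)) →
        (∀ x α : E d, C0⁻¹ * ‖α‖ ^ q' - C0 * (1 + Λ ^ q') ≤ L x α) →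
        (∀ x α : E d, |L x α| ≤ C0 * (1 + ‖α‖ ^ q' + Λ ^ q')) →
        (∀ x α : E d, ‖Lx x α‖ ≤ C0 * (1 + ‖α‖ ^ q' + Λ ^ q')) →
        ∀ x p : E d,
          HasGradientAt (fun y : E d => ⨆ α : E d, (-⟪p, α⟫_ℝ - L y α))
            (-(Lx x (astar x p))) x ∧
          ‖-(Lx x (astar x p))‖ ≤ Ct * (1 + ‖p‖ ^ q + Λ ^ q') := by
  have hpq : q'.HolderConjugate q := (Real.holderConjugate_iff_eq_conjExponent hq').2 hq
  set K := 4 * C0 ^ 2 + 2 * C0 * (2 * C0) ^ (q / q') with hK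
  refine ⟨C0 * (1 + K), by positivity, ?_⟩
  intro d _ Λ hΛ L Lx Lα astar hdiff hcont hmax hcoer hLb hLxb x p
  have hΛq' : 0 ≤ Λ ^ q' := rpow_nonneg hΛ _
  have hpq0 : 0 ≤ ‖p‖ ^ q := rpow_nonneg (norm_nonneg p) _
  have hbound (y : E d) : ‖astar y p‖ ^ q' ≤ K * (1 + ‖p‖ ^ q + Λ ^ q') := by
    have h0 : L y 0 ≤ C0 * (1 + Λ ^ q') := by
      simpa [zero_rpow hpq.ne_zero] using (le_abs_self _).trans (hLb y 0)
    have := rpow_norm_le_of_forall_inner_sub_le hpq hC0 (hmax y p).1 (hcoer y _) h0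
    have hG : 0 ≤ 2 * C0 * (2 * C0) ^ (q / q') := by positivity
    rw [hK]
    nlinarith [mul_nonneg (sq_nonneg C0) hpq0, mul_nonneg hG hΛq']
  refine ⟨hasGradientAt_iSup_neg_inner_sub (a := (astar · p))
    (fun y α ↦ hasGradientAt_left_of_hasFDerivAt_pairD (hdiff y α)) hcont.fst hcont.snd.fst
    (fun y ↦ (hmax y p).1) (hmax x p).2 fun y ↦ le_max_one_of_rpow_le hq'.le (hbound y), ?_⟩
  rw [norm_neg]
  nlinarith [hLxb x (astar x p), hbound x]
end
end

section
/- Stability of the fixed point in the joint law of states and controls: assume (A1)–(A5) on the torus T^d_a. Let (tⁿ,mⁿ,pⁿ)_{n∈ℕ} be a sequence in [0,T]×P(T^d_a)×C⁰(T^d_a;ℝ^d) such that tⁿ → t ∈ [0,T], pⁿ converges uniformly to p ∈ C⁰(T^d_a;ℝ^d), and mⁿ converges to m in the weak* topology. Let μⁿ (resp. μ) be the unique element of P(T^d_a×ℝ^d) satisfying μⁿ = (Id, −H_p(tⁿ,·,pⁿ(·),μⁿ))#mⁿ (resp. μ = (Id, −H_p(t,·,p(·),μ))#m). Then μⁿ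 converges to μ in P(T^d_a×ℝ^d) equipped with the weak* topology. -/
open MeasureTheory Real Set
open scoped InnerProductSpace

noncomputable section

/-- `Λ_r(μ) = (∫ |α|^r dμ(x,α))^{1/r}`, the `r`-th moment of the control marginal. -/
def lam {X : Type} [MeasurableSpace X] (d : ℕ) (r : ℝ)
    (μ : ProbabilityMeasure (X × E d)) : ℝ :=
  (∫ z : X × E d, ‖z.2‖ ^ r ∂(μ : Measure (X × E d))) ^ (1 / r)

/-- `μ ∈ P_{∞,R}`: the second marginal of `μ` is supported in the closed ball of radius `R`. -/
def InPinf {X : Type} [MeasurableSpace X] (d : ℕ) (R : ℝ)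
    (μ : ProbabilityMeasure (X × E d)) : Prop :=
  (μ : Measure (X × E d)) {z : X × E d | ¬ z.2 ∈ Metric.closedBall (0 : E d) R} = 0

/-- `Λ_∞(μ) = sup {|α| : (x,α) ∈ supp μ}`. -/
def lamInf {X : Type} [TopologicalSpace X] [MeasurableSpace X] (d : ℕ)
    (μ : ProbabilityMeasure (X × E d)) : ℝ :=
  sSup ((fun z : X × E d => ‖z.2‖) '' {z | ∀ U ∈ nhds z, 0 < (μ : Measure (X × E d)) U})

/-- Time derivative `∂_t φ` of a function on `ℝ × ℝ^d`. -/
def dt (d : ℕ) (φ : ℝ × E d → ℝ) (p : ℝ × E d) : ℝ := fderiv ℝ φ p (1, 0)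

/-- Spatial partial derivative `∂_{x_i} φ`. -/
def pdx (d : ℕ) (i : Fin d) (φ : ℝ × E d → ℝ) (p : ℝ × E d) : ℝ :=
  fderiv ℝ φ p (0, EuclideanSpace.single i 1)

/-- Spatial Laplacian `Δ_x φ`. -/
def lapx (d : ℕ) (φ : ℝ × E d → ℝ) (p : ℝ × E d) : ℝ := ∑ i : Fin d, pdx d i (pdx d i φ) p

/-- Spatial gradient `∇_x φ`. -/
def gradx (d : ℕ) (φ : ℝ × E d → ℝ) (p : ℝ × E d) : E d :=
  ∑ i : Fin d, pdx d i φ p • EuclideanSpace.single i 1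

/-- Test functions for the distributional formulation on `(0,T) × ℝ^d`: smooth, compactly
supported, with support contained in `(0,T) × ℝ^d`. -/
def IsTest (d : ℕ) (T : ℝ) (φ : ℝ × E d → ℝ) : Prop :=
  ContDiff ℝ (⊤ : ℕ∞) φ ∧ HasCompactSupport φ ∧ tsupport φ ⊆ Ioo 0 T ×ˢ univ

/-- The `d`-dimensional torus `T^d_a = ℝ^d/(aℤ^d)`. -/
abbrev Tor (d : ℕ) (a : ℝ) : Type := Fin d → AddCircle a

/-- The quotient map `ℝ^d → T^d_a`. -/
def projT (d : ℕ) (a : ℝ) (x : E d) : Tor d a := fun i => (x i : AddCircle a)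

/-- A (fundamental-domain) lift `T^d_a → ℝ^d`. -/
def liftT (d : ℕ) (a : ℝ) (ha : 0 < a) (y : Tor d a) : E d :=
  haveI : Fact (0 < a) := ⟨ha⟩
  (EuclideanSpace.equiv (Fin d) ℝ).symm fun i => ((AddCircle.equivIco a 0 (y i) : ℝ))

/-- The weak-* topology on probability measures on `T^d_a × ℝ^d` (registered explicitly to
help instance resolution). -/
instance pmTopT (d : ℕ) (a : ℝ) : TopologicalSpace (ProbabilityMeasure (Tor d a × E d)) :=
  inferInstance

/-- The weak-* topology on probability measures on `T^d_a` (registered explicitly to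
help instance resolution). -/
instance pmTopT' (d : ℕ) (a : ℝ) : TopologicalSpace (ProbabilityMeasure (Tor d a)) :=
  inferInstance

/-- The Hamiltonian `H(t,x,p,μ) = sup_α (−p·α − L(t,x,α,μ))` on the torus. -/
def HamT (d : ℕ) (a : ℝ) (L : ℝ → Tor d a → E d → ProbabilityMeasure (Tor d a × E d) → ℝ)
    (t : ℝ) (x : Tor d a) (p : E d) (μ : ProbabilityMeasure (Tor d a × E d)) : ℝ :=
  ⨆ α : E d, (-⟪p, α⟫_ℝ - L t x α μ)

/-- **(A1)** on the torus: `L` is differentiable with respect to `(x,α)` (differentiability in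
the state being understood through the quotient map `ℝ^d → T^d_a`), with derivatives `L_x`,
`L_α`, and `L, L_x, L_α` are continuous on `[0,T] × T^d_a × ℝ^d × P_{∞,R}` for all `R > 0`. -/
def A1T (d : ℕ) (a T : ℝ)
    (L : ℝ → Tor d a → E d → ProbabilityMeasure (Tor d a × E d) → ℝ)
    (Lx Lα : ℝ → Tor d a → E d → ProbabilityMeasure (Tor d a × E d) → E d) : Prop :=
  (∀ (t : ℝ) (x α : E d) (μv : ProbabilityMeasure (Tor d a × E d)),
      HasFDerivAt (fun z : E d × E d => L t (projT d a z.1) z.2 μv)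
        (pairD d (Lx t (projT d a x) α μv) (Lα t (projT d a x) α μv)) (x, α)) ∧
  ∀ R : ℝ, 0 < R → ContinuousOn
      (fun w : ℝ × Tor d a × E d × ProbabilityMeasure (Tor d a × E d) =>
        (L w.1 w.2.1 w.2.2.1 w.2.2.2, Lx w.1 w.2.1 w.2.2.1 w.2.2.2,
          Lα w.1 w.2.1 w.2.2.1 w.2.2.2))
      (Icc 0 T ×ˢ univ ×ˢ univ ×ˢ {μv | InPinf d R μv})

/-- **(A2)** on the torus: for every `(t,x,p,μ)` the supremum defining the Hamiltonian is
attained at the unique point `−H_p(t,x,p,μ)`. -/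
def A2T (d : ℕ) (a : ℝ)
    (L : ℝ → Tor d a → E d → ProbabilityMeasure (Tor d a × E d) → ℝ)
    (Hp : ℝ → Tor d a → E d → ProbabilityMeasure (Tor d a × E d) → E d) : Prop :=
  ∀ (t : ℝ) (x : Tor d a) (p : E d) (μv : ProbabilityMeasure (Tor d a × E d)),
    (∀ β : E d, -⟪p, β⟫_ℝ - L t x β μv
        ≤ -⟪p, -Hp t x p μv⟫_ℝ - L t x (-Hp t x p μv) μv) ∧
    (∀ α : E d, (∀ β : E d, -⟪p, β⟫_ℝ - L t x β μv ≤ -⟪p, α⟫_ℝ - L t x α μv) →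
        α = -Hp t x p μv)

/-- **(A3)** on the torus: Lasry–Lions monotonicity of `L` in the joint law of states
and controls. -/
def A3T (d : ℕ) (a T : ℝ)
    (L : ℝ → Tor d a → E d → ProbabilityMeasure (Tor d a × E d) → ℝ) : Prop :=
  ∀ t ∈ Icc (0 : ℝ) T, ∀ μ1 μ2 : ProbabilityMeasure (Tor d a × E d),
    0 ≤ (∫ z : Tor d a × E d, (L t z.1 z.2 μ1 - L t z.1 z.2 μ2)
            ∂(μ1 : Measure (Tor d a × E d)))
        - ∫ z : Tor d a × E d, (L t z.1 z.2 μ1 - L t z.1 z.2 μ2)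
            ∂(μ2 : Measure (Tor d a × E d))

/-- **(A4)** on the torus: coercivity of `L` in the control variable. -/
def A4T (d : ℕ) (a T q' C0 : ℝ)
    (L : ℝ → Tor d a → E d → ProbabilityMeasure (Tor d a × E d) → ℝ) : Prop :=
  ∀ t ∈ Icc (0 : ℝ) T, ∀ (x : Tor d a) (α : E d)
      (μv : ProbabilityMeasure (Tor d a × E d)),
    C0⁻¹ * ‖α‖ ^ q' - C0 * (1 + lam d q' μv ^ q') ≤ L t x α μv

/-- **(A5)** on the torus: growth of `L` and `L_x` in the control variable. -/
def A5T (d : ℕ) (a T q' C0 : ℝ)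
    (L : ℝ → Tor d a → E d → ProbabilityMeasure (Tor d a × E d) → ℝ)
    (Lx : ℝ → Tor d a → E d → ProbabilityMeasure (Tor d a × E d) → E d) : Prop :=
  ∀ t ∈ Icc (0 : ℝ) T, ∀ (x : Tor d a) (α : E d)
      (μv : ProbabilityMeasure (Tor d a × E d)),
    |L t x α μv| ≤ C0 * (1 + ‖α‖ ^ q' + lam d q' μv ^ q') ∧
    ‖Lx t x α μv‖ ≤ C0 * (1 + ‖α‖ ^ q' + lam d q' μv ^ q')

/-- **(A6)** on the torus: regularity and bounds on `m⁰`, `f` and `g` (regularity in the state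
being understood through the quotient map `ℝ^d → T^d_a`). -/
def A6T (d : ℕ) (a T C0 β0 : ℝ) (ha : 0 < a)
    (f : ℝ → Tor d a → ProbabilityMeasure (Tor d a) → ℝ)
    (g : Tor d a → ProbabilityMeasure (Tor d a) → ℝ)
    (m0 : ProbabilityMeasure (Tor d a)) : Prop :=
  haveI : Fact (0 < a) := ⟨ha⟩
  (∃ ρ : Tor d a → ℝ,
      (m0 : Measure (Tor d a)) = volume.withDensity (fun x => ENNReal.ofReal (ρ x)) ∧
      (∀ x, |ρ x| ≤ C0) ∧
      ∀ z w : E d, |ρ (projT d a z) - ρ (projT d a w)| ≤ C0 * ‖z - w‖ ^ β0) ∧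
  (∀ t ∈ Icc (0 : ℝ) T, ∀ (mv : ProbabilityMeasure (Tor d a)) (x : Tor d a),
      |f t x mv| ≤ C0) ∧
  (∀ t ∈ Icc (0 : ℝ) T, ∀ (mv : ProbabilityMeasure (Tor d a)) (z : E d),
      ∃ v : E d, HasGradientAt (fun y : E d => f t (projT d a y) mv) v z ∧ ‖v‖ ≤ C0) ∧
  (∀ mv : ProbabilityMeasure (Tor d a),
      ContDiff ℝ 2 (fun z : E d => g (projT d a z) mv) ∧
      ∀ z w : E d, |g (projT d a z) mv| ≤ C0 ∧
        ‖fderiv ℝ (fun y : E d => g (projT d a y) mv) z‖ ≤ C0 ∧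
        ‖iteratedFDeriv ℝ 2 (fun y : E d => g (projT d a y) mv) z‖ ≤ C0 ∧
        ‖iteratedFDeriv ℝ 2 (fun y : E d => g (projT d a y) mv) z
            - iteratedFDeriv ℝ 2 (fun y : E d => g (projT d a y) mv) w‖
          ≤ C0 * ‖z - w‖ ^ β0)

/-- Test functions for the distributional formulation on `(0,T) × T^d_a`: smooth `a`-periodic
functions on `ℝ × ℝ^d` with time support a compact subset of `(0,T)`. -/
def IsTestT (d : ℕ) (a T : ℝ) (φ : ℝ × E d → ℝ) : Prop :=
  ContDiff ℝ (⊤ : ℕ∞) φ ∧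
  (∀ (p : ℝ × E d) (i : Fin d), φ (p.1, p.2 + a • EuclideanSpace.single i 1) = φ p) ∧
  ∃ K : Set ℝ, IsCompact K ∧ K ⊆ Ioo 0 T ∧ ∀ t ∉ K, ∀ x : E d, φ (t, x) = 0

/-- The fixed point relation (at a fixed time `t`) for the joint law of states and controls:
`μ = (Id, −H_p(t,·,p(·),μ))#m`. -/
def IsFPT (d : ℕ) (a : ℝ)
    (Hp : ℝ → Tor d a → E d → ProbabilityMeasure (Tor d a × E d) → E d)
    (t : ℝ) (m : ProbabilityMeasure (Tor d a)) (p : Tor d a → E d)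
    (μ : ProbabilityMeasure (Tor d a × E d)) : Prop :=
  (μ : Measure (Tor d a × E d))
    = (m : Measure (Tor d a)).map (fun x => (x, -Hp t x (p x) μ))

/-- A solution `(u, ∇_x u, m, μ)` of the MFGC system (MFGCttda) on the torus `T^d_a`, for a
given Hamiltonian `H` with `p`-gradient `Hp`.  The PDEs are understood in the sense of
distributions, tested against smooth `a`-periodic test functions, derivatives and
differentiability on the torus being understood through the quotient map `ℝ^d → T^d_a` and
the fundamental-domain lift `T^d_a → ℝ^d`. -/
def IsSolT (d : ℕ) (a T ν : ℝ) (ha : 0 < a)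
    (H : ℝ → Tor d a → E d → ProbabilityMeasure (Tor d a × E d) → ℝ)
    (Hp : ℝ → Tor d a → E d → ProbabilityMeasure (Tor d a × E d) → E d)
    (f : ℝ → Tor d a → ProbabilityMeasure (Tor d a) → ℝ)
    (g : Tor d a → ProbabilityMeasure (Tor d a) → ℝ)
    (m0 : ProbabilityMeasure (Tor d a))
    (u : ℝ × Tor d a → ℝ) (Du : ℝ × Tor d a → E d)
    (m : ℝ → ProbabilityMeasure (Tor d a))
    (μ : ℝ → ProbabilityMeasure (Tor d a × E d)) : Prop :=
  haveI : Fact (0 < a) := ⟨ha⟩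
  Continuous u ∧ (∃ C, ∀ p, |u p| ≤ C) ∧
  Continuous Du ∧ (∃ C, ∀ p, ‖Du p‖ ≤ C) ∧
  (∀ t ∈ Icc (0 : ℝ) T, ∀ x : E d,
      HasGradientAt (fun y : E d => u (t, projT d a y)) (Du (t, projT d a x)) x) ∧
  (∀ x, u (T, x) = g x (m T)) ∧
  (∀ φ, IsTestT d a T φ →
    ∫ p : (ℝ × Tor d a), u p * (dt d φ (p.1, liftT d a ha p.2)
        - ν * lapx d φ (p.1, liftT d a ha p.2))
      = ∫ p : (ℝ × Tor d a), (f p.1 p.2 (m p.1) - H p.1 p.2 (Du p) (μ p.1))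
          * φ (p.1, liftT d a ha p.2)) ∧
  ContinuousOn m (Icc 0 T) ∧ m 0 = m0 ∧
  (∀ φ, IsTestT d a T φ →
    ∫ t in Ioo (0 : ℝ) T, (∫ y, (dt d φ (t, liftT d a ha y)
        + ν * lapx d φ (t, liftT d a ha y)
        - ⟪Hp t y (Du (t, y)) (μ t), gradx d φ (t, liftT d a ha y)⟫_ℝ)
      ∂(m t : Measure (Tor d a))) = 0) ∧
  (∀ t ∈ Icc (0 : ℝ) T, IsFPT d a Hp t (m t) (fun y => Du (t, y)) (μ t))

/-- r^q' ≤ A r + B implies an explicit bound on r. -/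
lemma rpow_selfbound {q' A B r : ℝ} (hq' : 1 < q') (hA : 0 ≤ A) (hB : 0 ≤ B)
    (hr : 0 ≤ r) (h : r ^ q' ≤ A * r + B) : r ≤ max 1 ((A + B) ^ (1/(q'-1))) := by
  rcases le_or_gt r 1 with h1 | h1
  · exact le_max_of_le_left h1
  · refine le_max_of_le_right ?_
    have hr0 : 0 < r := lt_trans zero_lt_one h1
    have hAB : r ^ q' ≤ (A + B) * r := by
      have : B ≤ B * r := le_mul_of_one_le_right hB h1.le
      nlinarith
    have hq1 : (0:ℝ) < q' - 1 := by linarith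
    have hpow : r ^ (q' - 1) ≤ A + B := by
      have hrq : r ^ q' = r ^ (q'-1) * r := by
        rw [← Real.rpow_add_one (ne_of_gt hr0)]; ring_nf
      rw [hrq] at hAB
      have := le_of_mul_le_mul_right hAB hr0
      exact this
    calc r = (r ^ (q'-1)) ^ (1/(q'-1)) := by
            rw [← Real.rpow_mul hr0.le, mul_one_div, div_self (ne_of_gt hq1), Real.rpow_one]
      _ ≤ (A + B) ^ (1/(q'-1)) := by
            apply Real.rpow_le_rpow (Real.rpow_nonneg hr0.le _) hpow
            positivity

section AuxMeasure

variable {d : ℕ} {a : ℝ}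

lemma aemeas_of_map_eq {α β : Type} [MeasurableSpace α] [MeasurableSpace β]
    (mm : MeasureTheory.Measure α) [MeasureTheory.IsProbabilityMeasure mm]
    (ν : MeasureTheory.Measure β) [MeasureTheory.IsProbabilityMeasure ν]
    (F : α → β) (h : ν = mm.map F) : AEMeasurable F mm := by
  by_contra hF
  rw [MeasureTheory.Measure.map_of_not_aemeasurable hF] at h
  have h2 := MeasureTheory.measure_univ (μ := ν)
  rw [h] at h2
  simp at h2

lemma pair_aemeasurable {mm : MeasureTheory.Measure (Tor d a)} {f : Tor d a → E d}
    (hf : AEMeasurable f mm) : AEMeasurable (fun x => (x, f x)) mm :=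
  aemeasurable_id.prodMk hf

lemma integral_map_pair {mm : MeasureTheory.Measure (Tor d a)} {f : Tor d a → E d}
    (hf : AEMeasurable f mm) {g : Tor d a × E d → ℝ}
    (hg : MeasureTheory.AEStronglyMeasurable g (mm.map (fun x => (x, f x)))) :
    ∫ z, g z ∂(mm.map (fun x => (x, f x))) = ∫ x, g (x, f x) ∂mm :=
  MeasureTheory.integral_map (pair_aemeasurable hf) hg

lemma map_pair_support {mm : MeasureTheory.Measure (Tor d a)} {f : Tor d a → E d}
    (hf : AEMeasurable f mm) {R : ℝ} (hb : ∀ x, ‖f x‖ ≤ R) :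
    (mm.map (fun x => (x, f x))) {z : Tor d a × E d | ¬ z.2 ∈ Metric.closedBall (0 : E d) R}
      = 0 := by
  have hset : {z : Tor d a × E d | ¬ z.2 ∈ Metric.closedBall (0 : E d) R}
      = Prod.snd ⁻¹' (Metric.closedBall (0 : E d) R)ᶜ := rfl
  rw [hset, MeasureTheory.Measure.map_apply_of_aemeasurable (pair_aemeasurable hf)
    (measurableSet_closedBall.compl.preimage measurable_snd)]
  convert MeasureTheory.measure_empty (μ := mm)
  ext x
  simp only [Set.mem_preimage, Set.mem_compl_iff, Metric.mem_closedBall, dist_zero_right,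
    Set.mem_empty_iff_false, iff_false, not_not]
  exact hb x

lemma lam_nonneg (q' : ℝ) (ν : MeasureTheory.ProbabilityMeasure (Tor d a × E d)) :
    0 ≤ lam d q' ν :=
  Real.rpow_nonneg (MeasureTheory.integral_nonneg fun z => Real.rpow_nonneg (norm_nonneg _) _) _

lemma lam_rpow {q' : ℝ} (hq : q' ≠ 0) (ν : MeasureTheory.ProbabilityMeasure (Tor d a × E d)) :
    lam d q' ν ^ q' = ∫ z, ‖z.2‖ ^ q' ∂(ν : MeasureTheory.Measure (Tor d a × E d)) := by
  unfold lam
  rw [← Real.rpow_mul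
    (MeasureTheory.integral_nonneg fun z => Real.rpow_nonneg (norm_nonneg _) _),
    one_div_mul_cancel hq, Real.rpow_one]

lemma continuous_norm_rpow {q' : ℝ} (hq : 0 < q') :
    Continuous (fun z : Tor d a × E d => ‖z.2‖ ^ q') :=
  continuous_snd.norm.rpow_const (fun z => Or.inr hq.le)

lemma InPinf_ae {R : ℝ} {ν : MeasureTheory.ProbabilityMeasure (Tor d a × E d)}
    (h : InPinf d R ν) :
    ∀ᵐ z ∂(ν : MeasureTheory.Measure (Tor d a × E d)), ‖z.2‖ ≤ R := by
  rw [MeasureTheory.ae_iff]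
  have hset : {z : Tor d a × E d | ¬ ‖z.2‖ ≤ R}
      = {z : Tor d a × E d | ¬ z.2 ∈ Metric.closedBall (0 : E d) R} := by
    ext z; simp [Metric.mem_closedBall, dist_zero_right]
  rw [hset]; exact h

lemma integral_norm_rpow_le {q' R : ℝ} (hq : 0 < q') (hR : 0 ≤ R)
    {ν : MeasureTheory.ProbabilityMeasure (Tor d a × E d)} (h : InPinf d R ν) :
    ∫ z, ‖z.2‖ ^ q' ∂(ν : MeasureTheory.Measure (Tor d a × E d)) ≤ R ^ q' := by
  have hae : ∀ᵐ z ∂(ν : MeasureTheory.Measure (Tor d a × E d)), ‖z.2‖ ^ q' ≤ R ^ q' :=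
    (InPinf_ae h).mono fun z hz => Real.rpow_le_rpow (norm_nonneg _) hz hq.le
  have hint : MeasureTheory.Integrable (fun z : Tor d a × E d => ‖z.2‖ ^ q')
      (ν : MeasureTheory.Measure (Tor d a × E d)) := by
    refine ⟨(continuous_norm_rpow hq).aestronglyMeasurable, ?_⟩
    apply MeasureTheory.HasFiniteIntegral.of_bounded (C := R ^ q')
    exact hae.mono fun z hz => by
      rwa [Real.norm_eq_abs, abs_of_nonneg (Real.rpow_nonneg (norm_nonneg _) _)]
  calc ∫ z, ‖z.2‖ ^ q' ∂(ν : MeasureTheory.Measure (Tor d a × E d))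
      ≤ ∫ _z, R ^ q' ∂(ν : MeasureTheory.Measure (Tor d a × E d)) :=
        MeasureTheory.integral_mono_ae hint (MeasureTheory.integrable_const _) hae
    _ = R ^ q' := by simp

lemma lam_le_of_inPinf {q' R : ℝ} (hq : 0 < q') (hR : 0 ≤ R)
    {ν : MeasureTheory.ProbabilityMeasure (Tor d a × E d)} (h : InPinf d R ν) :
    lam d q' ν ≤ R := by
  have h1 : lam d q' ν ^ q' ≤ R ^ q' := by
    rw [lam_rpow hq.ne' ν]; exact integral_norm_rpow_le hq hR h
  have h2 : (lam d q' ν ^ q') ^ (1/q') ≤ (R ^ q') ^ (1/q') :=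
    Real.rpow_le_rpow (Real.rpow_nonneg (lam_nonneg q' ν) _) h1 (by positivity)
  rwa [← Real.rpow_mul (lam_nonneg q' ν), ← Real.rpow_mul hR, mul_one_div,
    div_self hq.ne', Real.rpow_one, Real.rpow_one] at h2

lemma InPinf_mono {R R' : ℝ} {ν : MeasureTheory.ProbabilityMeasure (Tor d a × E d)}
    (h : InPinf d R ν) (hRR' : R ≤ R') : InPinf d R' ν := by
  refine MeasureTheory.measure_mono_null ?_ h
  intro z hz
  simp only [Set.mem_setOf_eq] at hz ⊢
  exact fun hc => hz (Metric.closedBall_subset_closedBall hRR' hc)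

end AuxMeasure
/-- Explicit constant for the Young-type inequality. -/
def youngM (q' C P : ℝ) : ℝ := P * max 1 ((2*C*(P+1)) ^ (1/(q'-1)))

lemma youngM_nonneg {q' C P : ℝ} (hP : 0 ≤ P) : 0 ≤ youngM q' C P :=
  mul_nonneg hP (le_trans zero_le_one (le_max_left _ _))

lemma young_bound' {q' C P : ℝ} (hq' : 1 < q') (hC : 0 < C) (hP : 0 ≤ P) :
    ∀ r : ℝ, 0 ≤ r → P * r ≤ (2*C)⁻¹ * r ^ q' + youngM q' C P := by
  intro r hr
  unfold youngM
  set r₀ : ℝ := max 1 ((2*C*(P+1)) ^ (1/(q'-1))) with hr₀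
  rcases le_or_gt r r₀ with h | h
  · have h1 : P * r ≤ P * r₀ := mul_le_mul_of_nonneg_left h hP
    have h2 : 0 ≤ (2*C)⁻¹ * r ^ q' := by positivity
    linarith
  · have h1 : (1:ℝ) < r := lt_of_le_of_lt (le_max_left _ _) h
    have hr0 : 0 < r := lt_trans zero_lt_one h1
    have hq1 : (0:ℝ) < q' - 1 := by linarith
    have hkey : 2*C*(P+1) ≤ r ^ (q'-1) := by
      have h2 : (2*C*(P+1)) ^ (1/(q'-1)) ≤ r := le_of_lt (lt_of_le_of_lt (le_max_right _ _) h)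
      have h3 : ((2*C*(P+1)) ^ (1/(q'-1))) ^ (q'-1) ≤ r ^ (q'-1) :=
        Real.rpow_le_rpow (Real.rpow_nonneg (by positivity) _) h2 hq1.le
      rwa [← Real.rpow_mul (by positivity), one_div_mul_cancel (ne_of_gt hq1),
        Real.rpow_one] at h3
    have hrq : r ^ q' = r ^ (q'-1) * r := by
      rw [← Real.rpow_add_one (ne_of_gt hr0)]; ring_nf
    have hmain : P * r ≤ (2*C)⁻¹ * r ^ q' := by
      rw [hrq]
      have h4 : (2*C*(P+1)) * r ≤ r ^ (q'-1) * r :=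
        mul_le_mul_of_nonneg_right hkey hr0.le
      have h2C : (0:ℝ) < 2*C := by linarith
      have key : (2*C)⁻¹ * ((2*C*(P+1)) * r) = (P+1) * r := by
        field_simp
      have h6 : (2*C)⁻¹ * ((2*C*(P+1)) * r) ≤ (2*C)⁻¹ * (r ^ (q'-1) * r) :=
        mul_le_mul_of_nonneg_left h4 (by positivity)
      rw [key] at h6
      nlinarith
    have h5 : 0 ≤ P * r₀ := by positivity
    linarith

/-- Uniform bound for the moment `lam^{q'}` of a fixed point. -/
def Istar (q' C0 P : ℝ) : ℝ := 2*C0*(youngM q' C0 P + 2*C0)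

lemma Istar_nonneg {q' C0 P : ℝ} (hC0 : 0 < C0) (hP : 0 ≤ P) : 0 ≤ Istar q' C0 P := by
  have := youngM_nonneg (q' := q') (C := C0) hP
  unfold Istar; positivity

/-- Bound for the norm of the maximizer, in terms of a bound `P` on `‖p‖` and a bound `I`
on `lam^{q'}`. -/
def Rbound (q' C0 P I : ℝ) : ℝ := max 1 ((C0*P + 2*C0^2*(1+I)) ^ (1/(q'-1)))

lemma Rbound_pos {q' C0 P I : ℝ} : 0 < Rbound q' C0 P I :=
  lt_of_lt_of_le zero_lt_one (le_max_left _ _)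

lemma Rbound_mono {q' C0 P I I' : ℝ} (hq' : 1 < q') (hC0 : 0 < C0) (hP : 0 ≤ P)
    (hI : 0 ≤ I) (h : I ≤ I') : Rbound q' C0 P I ≤ Rbound q' C0 P I' := by
  apply max_le_max le_rfl
  have hq1 : (0:ℝ) < q' - 1 := by linarith
  apply Real.rpow_le_rpow (by nlinarith) (by nlinarith) (by positivity)

section Main

variable {d : ℕ} {a T q' C0 : ℝ}
variable {L : ℝ → Tor d a → E d → ProbabilityMeasure (Tor d a × E d) → ℝ}
variable {Lx Lα : ℝ → Tor d a → E d → ProbabilityMeasure (Tor d a × E d) → E d}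
variable {Hp : ℝ → Tor d a → E d → ProbabilityMeasure (Tor d a × E d) → E d}

/-- Norm bound for the maximizer. -/
lemma Hp_norm_bound (hq' : 1 < q') (hC0 : 0 < C0)
    (hA2 : A2T d a L Hp) (hA4 : A4T d a T q' C0 L) (hA5 : A5T d a T q' C0 L Lx)
    {t : ℝ} (ht : t ∈ Icc (0:ℝ) T) (x : Tor d a) {pv : E d}
    (μv : ProbabilityMeasure (Tor d a × E d)) {P I : ℝ}
    (hP : 0 ≤ P) (hpv : ‖pv‖ ≤ P) (hI : 0 ≤ I) (hlam : lam d q' μv ^ q' ≤ I) :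
    ‖Hp t x pv μv‖ ≤ Rbound q' C0 P I := by
  set α : E d := -Hp t x pv μv with hα
  have hopt := (hA2 t x pv μv).1 0
  rw [← hα] at hopt
  have hL0 : |L t x 0 μv| ≤ C0 * (1 + lam d q' μv ^ q') := by
    have := (hA5 t ht x 0 μv).1
    rwa [norm_zero, Real.zero_rpow (by positivity), add_zero] at this
  have hA4' := hA4 t ht x α μv
  have hinner : -⟪pv, α⟫_ℝ ≤ P * ‖α‖ := by
    calc -⟪pv, α⟫_ℝ ≤ |⟪pv, α⟫_ℝ| := neg_le_abs _
      _ ≤ ‖pv‖ * ‖α‖ := abs_real_inner_le_norm _ _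
      _ ≤ P * ‖α‖ := mul_le_mul_of_nonneg_right hpv (norm_nonneg _)
  have hlam0 : 0 ≤ lam d q' μv ^ q' :=
    Real.rpow_nonneg (lam_nonneg _ _) _
  have hkey : C0⁻¹ * ‖α‖ ^ q' ≤ P * ‖α‖ + 2*C0*(1+I) := by
    have h1 : C0⁻¹ * ‖α‖ ^ q' - C0 * (1 + lam d q' μv ^ q') ≤ L t x α μv := hA4'
    have h2 : L t x α μv ≤ -⟪pv, α⟫_ℝ + L t x 0 μv := by
      have h3 : -⟪pv, (0:E d)⟫_ℝ - L t x 0 μv ≤ -⟪pv, α⟫_ℝ - L t x α μv := hopt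
      rw [inner_zero_right, neg_zero, zero_sub] at h3
      linarith
    have h4 : L t x 0 μv ≤ C0 * (1 + lam d q' μv ^ q') := le_trans (le_abs_self _) hL0
    have h5 : C0 * (1 + lam d q' μv ^ q') ≤ C0 * (1 + I) :=
      mul_le_mul_of_nonneg_left (by linarith) hC0.le
    nlinarith
  have hfin : ‖α‖ ^ q' ≤ (C0*P) * ‖α‖ + 2*C0^2*(1+I) := by
    have h7 := mul_le_mul_of_nonneg_left hkey hC0.le
    have hC0inv : C0 * (C0⁻¹ * ‖α‖ ^ q') = ‖α‖ ^ q' := by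
      field_simp
    have h8 : C0 * (P * ‖α‖ + 2*C0*(1+I)) = C0*P*‖α‖ + 2*C0^2*(1+I) := by ring
    linarith [hC0inv ▸ h8 ▸ h7]
  have := rpow_selfbound hq' (by positivity) (by positivity) (norm_nonneg α) hfin
  rw [hα, norm_neg] at this
  calc ‖Hp t x pv μv‖ ≤ max 1 ((C0*P + 2*C0^2*(1+I)) ^ (1/(q'-1))) := this
    _ = Rbound q' C0 P I := rfl

/-- Continuity of the `(x, α)`-slice of `L`. -/
lemma L_slice_continuous (hA1 : A1T d a T L Lx Lα) {R t : ℝ}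
    {μv : ProbabilityMeasure (Tor d a × E d)}
    (hR : 0 < R) (ht : t ∈ Icc (0:ℝ) T) (hμ : InPinf d R μv) :
    Continuous (fun z : Tor d a × E d => L t z.1 z.2 μv) := by
  have hψ : Continuous (fun z : Tor d a × E d =>
      ((t, z.1, z.2, μv) : ℝ × Tor d a × E d × ProbabilityMeasure (Tor d a × E d))) :=
    continuous_const.prodMk (continuous_fst.prodMk (continuous_snd.prodMk continuous_const))
  have hmem : ∀ z : Tor d a × E d, ((t, z.1, z.2, μv) : ℝ × Tor d a × E d ×
      ProbabilityMeasure (Tor d a × E d)) ∈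
      (Icc 0 T ×ˢ univ ×ˢ univ ×ˢ {μw | InPinf d R μw}) := by
    intro z
    refine ⟨ht, mem_univ _, mem_univ _, hμ⟩
  have hcomp := (hA1.2 R hR).comp_continuous hψ hmem
  exact (continuous_fst.comp hcomp)

/-- Sequential convergence of `L` along convergent data in the continuity domain. -/
lemma L_seq_tendsto (hA1 : A1T d a T L Lx Lα) {R : ℝ} (hR : 0 < R)
    {tk : ℕ → ℝ} {t0 : ℝ} (htk : ∀ k, tk k ∈ Icc (0:ℝ) T) (ht0 : t0 ∈ Icc (0:ℝ) T)
    (htc : Filter.Tendsto tk Filter.atTop (nhds t0))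
    {zk : ℕ → Tor d a × E d} {z0 : Tor d a × E d}
    (hzc : Filter.Tendsto zk Filter.atTop (nhds z0))
    {μk : ℕ → ProbabilityMeasure (Tor d a × E d)} {μ0 : ProbabilityMeasure (Tor d a × E d)}
    (hμk : ∀ k, InPinf d R (μk k)) (hμ0 : InPinf d R μ0)
    (hμc : Filter.Tendsto μk Filter.atTop (nhds μ0)) :
    Filter.Tendsto (fun k => L (tk k) (zk k).1 (zk k).2 (μk k)) Filter.atTop
      (nhds (L t0 z0.1 z0.2 μ0)) := by
  set S := (Icc 0 T ×ˢ univ ×ˢ univ ×ˢ {μw | InPinf d R μw} :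
    Set (ℝ × Tor d a × E d × ProbabilityMeasure (Tor d a × E d)))
  set w : ℕ → ℝ × Tor d a × E d × ProbabilityMeasure (Tor d a × E d) :=
    fun k => (tk k, (zk k).1, (zk k).2, μk k)
  set w0 : ℝ × Tor d a × E d × ProbabilityMeasure (Tor d a × E d) := (t0, z0.1, z0.2, μ0)
  have hw : Filter.Tendsto w Filter.atTop (nhdsWithin w0 S) := by
    rw [tendsto_nhdsWithin_iff]
    constructor
    · exact htc.prodMk_nhds (((continuous_fst.tendsto z0).comp hzc).prodMk_nhds
        (((continuous_snd.tendsto z0).comp hzc).prodMk_nhds hμc))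
    · exact Filter.Eventually.of_forall fun k => ⟨htk k, mem_univ _, mem_univ _, hμk k⟩
  have hc : ContinuousWithinAt (fun w : ℝ × Tor d a × E d ×
      ProbabilityMeasure (Tor d a × E d) =>
        (L w.1 w.2.1 w.2.2.1 w.2.2.2, Lx w.1 w.2.1 w.2.2.1 w.2.2.2,
          Lα w.1 w.2.1 w.2.2.1 w.2.2.2)) S w0 :=
    (hA1.2 R hR) w0 ⟨ht0, mem_univ _, mem_univ _, hμ0⟩
  have := hc.tendsto.comp hw
  have hfst := (continuous_fst.tendsto _).comp this
  exact hfst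

end Main
section Main2

variable {d : ℕ} {a T q' C0 : ℝ}
variable {L : ℝ → Tor d a → E d → ProbabilityMeasure (Tor d a × E d) → ℝ}
variable {Lx Lα : ℝ → Tor d a → E d → ProbabilityMeasure (Tor d a × E d) → E d}
variable {Hp : ℝ → Tor d a → E d → ProbabilityMeasure (Tor d a × E d) → E d}

lemma comp_pair_aesm {mm : MeasureTheory.Measure (Tor d a)} {f : Tor d a → E d}
    (hf : AEMeasurable f mm) {G : Tor d a × E d → ℝ} (hG : Continuous G) :
    MeasureTheory.AEStronglyMeasurable (fun x => G (x, f x)) mm :=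
  (hG.measurable.comp_aemeasurable (pair_aemeasurable hf)).aestronglyMeasurable

lemma comp_pair_integrable {mm : MeasureTheory.Measure (Tor d a)}
    [MeasureTheory.IsProbabilityMeasure mm] {f : Tor d a → E d}
    (hf : AEMeasurable f mm) {G : Tor d a × E d → ℝ} (hG : Continuous G) {B : ℝ}
    (hB : ∀ x, |G (x, f x)| ≤ B) :
    MeasureTheory.Integrable (fun x => G (x, f x)) mm :=
  ⟨comp_pair_aesm hf hG, MeasureTheory.HasFiniteIntegral.of_bounded
    (MeasureTheory.ae_of_all _ fun x => by rw [Real.norm_eq_abs]; exact hB x)⟩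

/-- Pointwise optimality of the maximizer against `β = 0`. -/
lemma opt_vs_zero (hA2 : A2T d a L Hp) (t : ℝ) (x : Tor d a) (pv : E d)
    (μv : ProbabilityMeasure (Tor d a × E d)) {P : ℝ} (hpv : ‖pv‖ ≤ P) :
    L t x (-Hp t x pv μv) μv ≤ P * ‖-Hp t x pv μv‖ + L t x 0 μv := by
  have h3 := (hA2 t x pv μv).1 0
  rw [inner_zero_right, neg_zero, zero_sub] at h3
  have hinner : -⟪pv, -Hp t x pv μv⟫_ℝ ≤ P * ‖-Hp t x pv μv‖ := by
    calc -⟪pv, -Hp t x pv μv⟫_ℝ ≤ |⟪pv, -Hp t x pv μv⟫_ℝ| := neg_le_abs _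
      _ ≤ ‖pv‖ * ‖-Hp t x pv μv‖ := abs_real_inner_le_norm _ _
      _ ≤ P * ‖-Hp t x pv μv‖ :=
          mul_le_mul_of_nonneg_right hpv (norm_nonneg _)
  linarith

/-- The uniform moment bound for fixed points. -/
lemma fp_moment_bound (hq' : 1 < q') (hC0 : 0 < C0)
    (hA1 : A1T d a T L Lx Lα) (hA2 : A2T d a L Hp) (hA3 : A3T d a T L)
    (hA4 : A4T d a T q' C0 L) (hA5 : A5T d a T q' C0 L Lx)
    {t : ℝ} (ht : t ∈ Icc (0:ℝ) T) {mm : ProbabilityMeasure (Tor d a)}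
    {pf : Tor d a → E d} {μv : ProbabilityMeasure (Tor d a × E d)}
    (hfp : IsFPT d a Hp t mm pf μv) {P : ℝ} (hP : 0 ≤ P) (hpb : ∀ x, ‖pf x‖ ≤ P) :
    lam d q' μv ^ q' ≤ Istar q' C0 P := by
  classical
  have hq0 : (0:ℝ) < q' := lt_trans zero_lt_one hq'
  set α : Tor d a → E d := fun x => -Hp t x (pf x) μv with hα
  have hmap : (μv : MeasureTheory.Measure (Tor d a × E d))
      = (mm : MeasureTheory.Measure (Tor d a)).map (fun x => (x, α x)) := hfp
  have hFae : AEMeasurable (fun x => (x, α x)) (mm : MeasureTheory.Measure (Tor d a)) :=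
    aemeas_of_map_eq _ _ _ hmap
  have hαae : AEMeasurable α (mm : MeasureTheory.Measure (Tor d a)) :=
    measurable_snd.comp_aemeasurable hFae
  set I0 : ℝ := lam d q' μv ^ q' with hI0
  have hI0_nonneg : 0 ≤ I0 := Real.rpow_nonneg (lam_nonneg _ _) _
  have hI0_eq : I0 = ∫ x, ‖α x‖ ^ q' ∂(mm : MeasureTheory.Measure (Tor d a)) := by
    rw [hI0, lam_rpow hq0.ne', hmap,
      integral_map_pair hαae (continuous_norm_rpow hq0).aestronglyMeasurable]
  set Rn : ℝ := Rbound q' C0 P I0 with hRn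
  have hRnpos : 0 < Rn := Rbound_pos
  have hbnd : ∀ x, ‖α x‖ ≤ Rn := by
    intro x
    rw [hα]; simp only [norm_neg]
    exact Hp_norm_bound hq' hC0 hA2 hA4 hA5 ht x μv hP (hpb x) hI0_nonneg le_rfl
  have hμsup : InPinf d Rn μv := by
    unfold InPinf; rw [hmap]; exact map_pair_support hαae hbnd
  -- the reference measure τ with zero controls
  set τf : Tor d a → E d := fun _ => 0 with hτf
  have h0ae : AEMeasurable τf (mm : MeasureTheory.Measure (Tor d a)) := aemeasurable_const
  have hτprob : MeasureTheory.IsProbabilityMeasure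
      ((mm : MeasureTheory.Measure (Tor d a)).map (fun x => (x, τf x))) :=
    MeasureTheory.Measure.isProbabilityMeasure_map (pair_aemeasurable h0ae)
  set τ : ProbabilityMeasure (Tor d a × E d) :=
    ⟨(mm : MeasureTheory.Measure (Tor d a)).map (fun x => (x, τf x)), hτprob⟩ with hτ
  have hτcoe : (τ : MeasureTheory.Measure (Tor d a × E d))
      = (mm : MeasureTheory.Measure (Tor d a)).map (fun x => (x, τf x)) := rfl
  have hlamτ : lam d q' τ = 0 := by
    unfold lam
    rw [hτcoe, integral_map_pair h0ae (continuous_norm_rpow hq0).aestronglyMeasurable]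
    simp only [hτf, norm_zero, Real.zero_rpow hq0.ne', MeasureTheory.integral_zero]
    exact Real.zero_rpow (by positivity)
  have hlamτq : lam d q' τ ^ q' = 0 := by rw [hlamτ]; exact Real.zero_rpow hq0.ne'
  have hτsup : InPinf d Rn τ := by
    unfold InPinf; rw [hτcoe]
    exact map_pair_support h0ae (fun x => by simp [hτf, hRnpos.le])
  -- continuity of slices
  have hg0 : Continuous (fun z : Tor d a × E d => L t z.1 z.2 μv) :=
    L_slice_continuous hA1 hRnpos ht hμsup
  have hg1 : Continuous (fun z : Tor d a × E d => L t z.1 z.2 τ) :=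
    L_slice_continuous hA1 hRnpos ht hτsup
  -- pointwise bounds
  have hRq : ∀ x, ‖α x‖ ^ q' ≤ Rn ^ q' := fun x =>
    Real.rpow_le_rpow (norm_nonneg _) (hbnd x) hq0.le
  have habs0 : ∀ x, |L t x (α x) μv| ≤ C0 * (1 + Rn ^ q' + I0) := by
    intro x
    refine le_trans ((hA5 t ht x (α x) μv).1) ?_
    have := hRq x
    apply mul_le_mul_of_nonneg_left _ hC0.le
    rw [← hI0]
    linarith
  have habs1 : ∀ x, |L t x (α x) τ| ≤ C0 * (1 + Rn ^ q' + I0) := by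
    intro x
    refine le_trans ((hA5 t ht x (α x) τ).1) ?_
    have := hRq x
    apply mul_le_mul_of_nonneg_left _ hC0.le
    rw [hlamτq]
    linarith
  have hzeroq : ‖(0:E d)‖ ^ q' = 0 := by
    rw [norm_zero]; exact Real.zero_rpow hq0.ne'
  have habs00 : ∀ x : Tor d a, |L t x 0 μv| ≤ C0 * (1 + Rn ^ q' + I0) := by
    intro x
    refine le_trans ((hA5 t ht x 0 μv).1) ?_
    apply mul_le_mul_of_nonneg_left _ hC0.le
    rw [hzeroq, ← hI0]
    have : (0:ℝ) ≤ Rn ^ q' := Real.rpow_nonneg hRnpos.le _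
    linarith
  have habs10 : ∀ x : Tor d a, |L t x 0 τ| ≤ C0 := by
    intro x
    refine le_trans ((hA5 t ht x 0 τ).1) ?_
    rw [hzeroq, hlamτq]
    simp
  -- integrability
  have hint_g0α : MeasureTheory.Integrable (fun x => L t x (α x) μv)
      (mm : MeasureTheory.Measure (Tor d a)) :=
    comp_pair_integrable hαae hg0 habs0
  have hint_g1α : MeasureTheory.Integrable (fun x => L t x (α x) τ)
      (mm : MeasureTheory.Measure (Tor d a)) :=
    comp_pair_integrable hαae hg1 habs1
  have hint_g00 : MeasureTheory.Integrable (fun x => L t x 0 μv)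
      (mm : MeasureTheory.Measure (Tor d a)) :=
    comp_pair_integrable h0ae hg0 habs00
  have hint_g10 : MeasureTheory.Integrable (fun x => L t x 0 τ)
      (mm : MeasureTheory.Measure (Tor d a)) :=
    comp_pair_integrable h0ae hg1 habs10
  have hint_nq : MeasureTheory.Integrable (fun x => ‖α x‖ ^ q')
      (mm : MeasureTheory.Measure (Tor d a)) :=
    comp_pair_integrable hαae (continuous_norm_rpow hq0)
      (fun x => by rw [abs_of_nonneg (Real.rpow_nonneg (norm_nonneg _) _)]; exact hRq x)
  have hint_n1 : MeasureTheory.Integrable (fun x => ‖α x‖)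
      (mm : MeasureTheory.Measure (Tor d a)) :=
    comp_pair_integrable hαae continuous_snd.norm
      (fun x => by rw [abs_of_nonneg (norm_nonneg _)]; exact hbnd x)
  -- A3
  have hA3' := hA3 t ht μv τ
  have hrw1 : ∫ z : Tor d a × E d, (L t z.1 z.2 μv - L t z.1 z.2 τ)
      ∂(μv : MeasureTheory.Measure (Tor d a × E d))
      = (∫ x, L t x (α x) μv ∂(mm : MeasureTheory.Measure (Tor d a)))
        - ∫ x, L t x (α x) τ ∂(mm : MeasureTheory.Measure (Tor d a)) := by
    rw [hmap, integral_map_pair (g := fun z : Tor d a × E d => L t z.1 z.2 μv - L t z.1 z.2 τ) hαae (hg0.sub hg1).aestronglyMeasurable]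
    exact MeasureTheory.integral_sub hint_g0α hint_g1α
  have hrw2 : ∫ z : Tor d a × E d, (L t z.1 z.2 μv - L t z.1 z.2 τ)
      ∂(τ : MeasureTheory.Measure (Tor d a × E d))
      = (∫ x, L t x 0 μv ∂(mm : MeasureTheory.Measure (Tor d a)))
        - ∫ x, L t x 0 τ ∂(mm : MeasureTheory.Measure (Tor d a)) := by
    rw [hτcoe, integral_map_pair (g := fun z : Tor d a × E d => L t z.1 z.2 μv - L t z.1 z.2 τ) h0ae (hg0.sub hg1).aestronglyMeasurable]
    exact MeasureTheory.integral_sub hint_g00 hint_g10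
  rw [hrw1, hrw2] at hA3'
  -- optimality + Young
  have hoptx : ∀ x, L t x (α x) μv ≤ (2*C0)⁻¹ * ‖α x‖ ^ q' + youngM q' C0 P + L t x 0 μv := by
    intro x
    have h1 := opt_vs_zero hA2 t x (pf x) μv (hpb x)
    have h2 := young_bound' hq' hC0 hP (‖α x‖) (norm_nonneg _)
    rw [hα] at *
    simp only at h1 h2 ⊢
    linarith
  have hA4x : ∀ x, C0⁻¹ * ‖α x‖ ^ q' - C0 ≤ L t x (α x) τ := by
    intro x
    have := hA4 t ht x (α x) τ
    rw [hlamτq] at this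
    simpa using this
  have hg10x : ∀ x : Tor d a, L t x 0 τ ≤ C0 := fun x =>
    le_trans (le_abs_self _) (habs10 x)
  -- integrate
  have hI1 : ∫ x, L t x (α x) μv ∂(mm : MeasureTheory.Measure (Tor d a))
      ≤ (2*C0)⁻¹ * I0 + youngM q' C0 P
        + ∫ x, L t x 0 μv ∂(mm : MeasureTheory.Measure (Tor d a)) := by
    have h1 : ∫ x, L t x (α x) μv ∂(mm : MeasureTheory.Measure (Tor d a))
        ≤ ∫ x, ((2*C0)⁻¹ * ‖α x‖ ^ q' + youngM q' C0 P + L t x 0 μv)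
          ∂(mm : MeasureTheory.Measure (Tor d a)) :=
      MeasureTheory.integral_mono hint_g0α
        (((hint_nq.const_mul _).add (MeasureTheory.integrable_const _)).add hint_g00) hoptx
    have hia : MeasureTheory.Integrable (fun x => (2*C0)⁻¹ * ‖α x‖ ^ q')
        (mm : MeasureTheory.Measure (Tor d a)) := hint_nq.const_mul _
    have hib : MeasureTheory.Integrable
        (fun x : Tor d a => (2*C0)⁻¹ * ‖α x‖ ^ q' + youngM q' C0 P)
        (mm : MeasureTheory.Measure (Tor d a)) :=
      hia.add (MeasureTheory.integrable_const _)
    have hval : ∫ x, ((2*C0)⁻¹ * ‖α x‖ ^ q' + youngM q' C0 P + L t x 0 μv)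
          ∂(mm : MeasureTheory.Measure (Tor d a))
        = (2*C0)⁻¹ * I0 + youngM q' C0 P
          + ∫ x, L t x 0 μv ∂(mm : MeasureTheory.Measure (Tor d a)) := by
      rw [MeasureTheory.integral_add hib hint_g00,
        MeasureTheory.integral_add hia (MeasureTheory.integrable_const _),
        MeasureTheory.integral_const_mul, MeasureTheory.integral_const]
      simp only [MeasureTheory.measure_univ, MeasureTheory.probReal_univ, one_smul]
      rw [← hI0_eq]
    rw [hval] at h1
    exact h1
  have hI2 : C0⁻¹ * I0 - C0 ≤ ∫ x, L t x (α x) τ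
      ∂(mm : MeasureTheory.Measure (Tor d a)) := by
    have h1 : ∫ x, (C0⁻¹ * ‖α x‖ ^ q' - C0) ∂(mm : MeasureTheory.Measure (Tor d a))
        ≤ ∫ x, L t x (α x) τ ∂(mm : MeasureTheory.Measure (Tor d a)) :=
      MeasureTheory.integral_mono ((hint_nq.const_mul _).sub
        (MeasureTheory.integrable_const _)) hint_g1α hA4x
    have hia : MeasureTheory.Integrable (fun x => C0⁻¹ * ‖α x‖ ^ q')
        (mm : MeasureTheory.Measure (Tor d a)) := hint_nq.const_mul _
    have hval : ∫ x, (C0⁻¹ * ‖α x‖ ^ q' - C0) ∂(mm : MeasureTheory.Measure (Tor d a))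
        = C0⁻¹ * I0 - C0 := by
      rw [MeasureTheory.integral_sub hia
        (MeasureTheory.integrable_const _), MeasureTheory.integral_const_mul,
        MeasureTheory.integral_const]
      simp only [MeasureTheory.measure_univ, MeasureTheory.probReal_univ, one_smul]
      rw [← hI0_eq]
    rw [hval] at h1
    exact h1
  have hI3 : ∫ x, L t x 0 τ ∂(mm : MeasureTheory.Measure (Tor d a)) ≤ C0 := by
    have h1 : ∫ x, L t x 0 τ ∂(mm : MeasureTheory.Measure (Tor d a))
        ≤ ∫ _x : Tor d a, C0 ∂(mm : MeasureTheory.Measure (Tor d a)) :=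
      MeasureTheory.integral_mono hint_g10 (MeasureTheory.integrable_const _) hg10x
    rwa [MeasureTheory.integral_const, MeasureTheory.probReal_univ,
      one_smul] at h1
  -- conclude
  have hfinal : (2*C0)⁻¹ * I0 ≤ youngM q' C0 P + 2*C0 := by
    have hsplit : C0⁻¹ * I0 = (2*C0)⁻¹ * I0 + (2*C0)⁻¹ * I0 := by
      field_simp; ring
    linarith
  have h2C0 : (0:ℝ) < 2*C0 := by linarith
  have := mul_le_mul_of_nonneg_left hfinal h2C0.le
  rw [← mul_assoc, mul_inv_cancel₀ h2C0.ne', one_mul] at this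
  calc I0 ≤ 2*C0 * (youngM q' C0 P + 2*C0) := this
    _ = Istar q' C0 P := rfl

end Main2
section Main3

variable {d : ℕ} {a T q' C0 : ℝ}
variable {L : ℝ → Tor d a → E d → ProbabilityMeasure (Tor d a × E d) → ℝ}
variable {Lx Lα : ℝ → Tor d a → E d → ProbabilityMeasure (Tor d a × E d) → E d}
variable {Hp : ℝ → Tor d a → E d → ProbabilityMeasure (Tor d a × E d) → E d}

/-- Packaged bounds for a fixed point. -/
lemma fp_all_bounds (hq' : 1 < q') (hC0 : 0 < C0)
    (hA1 : A1T d a T L Lx Lα) (hA2 : A2T d a L Hp) (hA3 : A3T d a T L)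
    (hA4 : A4T d a T q' C0 L) (hA5 : A5T d a T q' C0 L Lx)
    {t : ℝ} (ht : t ∈ Icc (0:ℝ) T) {mm : ProbabilityMeasure (Tor d a)}
    {pf : Tor d a → E d} {μv : ProbabilityMeasure (Tor d a × E d)}
    (hfp : IsFPT d a Hp t mm pf μv) {P : ℝ} (hP : 0 ≤ P) (hpb : ∀ x, ‖pf x‖ ≤ P) :
    (∀ x, ‖-Hp t x (pf x) μv‖ ≤ Rbound q' C0 P (Istar q' C0 P)) ∧
    InPinf d (Rbound q' C0 P (Istar q' C0 P)) μv ∧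
    AEMeasurable (fun x => -Hp t x (pf x) μv)
      (mm : MeasureTheory.Measure (Tor d a)) := by
  have hmom := fp_moment_bound hq' hC0 hA1 hA2 hA3 hA4 hA5 ht hfp hP hpb
  have hbnd : ∀ x, ‖-Hp t x (pf x) μv‖ ≤ Rbound q' C0 P (Istar q' C0 P) := by
    intro x
    rw [norm_neg]
    exact Hp_norm_bound hq' hC0 hA2 hA4 hA5 ht x μv hP (hpb x) (Istar_nonneg hC0 hP) hmom
  have hFae : AEMeasurable (fun x => (x, -Hp t x (pf x) μv))
      (mm : MeasureTheory.Measure (Tor d a)) := aemeas_of_map_eq _ _ _ hfp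
  have hαae : AEMeasurable (fun x => -Hp t x (pf x) μv)
      (mm : MeasureTheory.Measure (Tor d a)) := measurable_snd.comp_aemeasurable hFae
  refine ⟨hbnd, ?_, hαae⟩
  unfold InPinf
  rw [hfp]
  exact map_pair_support hαae hbnd

/-- Convergence of maximizers along convergent data. -/
lemma argmax_tendsto (hq' : 1 < q') (hC0 : 0 < C0)
    (hA1 : A1T d a T L Lx Lα) (hA2 : A2T d a L Hp)
    (hA4 : A4T d a T q' C0 L) (hA5 : A5T d a T q' C0 L Lx)
    {R P : ℝ} (hR : 0 < R) (hP : 0 ≤ P)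
    {tk : ℕ → ℝ} {t0 : ℝ} (htk : ∀ k, tk k ∈ Icc (0:ℝ) T) (ht0 : t0 ∈ Icc (0:ℝ) T)
    (htc : Filter.Tendsto tk Filter.atTop (nhds t0))
    {xk : ℕ → Tor d a} {x0 : Tor d a} (hxc : Filter.Tendsto xk Filter.atTop (nhds x0))
    {pk : ℕ → E d} {p0 : E d} (hpk : ∀ k, ‖pk k‖ ≤ P) (hp0 : ‖p0‖ ≤ P)
    (hpc : Filter.Tendsto pk Filter.atTop (nhds p0))
    {μk : ℕ → ProbabilityMeasure (Tor d a × E d)} {μ0 : ProbabilityMeasure (Tor d a × E d)}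
    (hμk : ∀ k, InPinf d R (μk k)) (hμ0 : InPinf d R μ0)
    (hμc : Filter.Tendsto μk Filter.atTop (nhds μ0)) :
    Filter.Tendsto (fun k => -Hp (tk k) (xk k) (pk k) (μk k)) Filter.atTop
      (nhds (-Hp t0 x0 p0 μ0)) := by
  have hq0 : (0:ℝ) < q' := lt_trans zero_lt_one hq'
  set γ : ℕ → E d := fun k => -Hp (tk k) (xk k) (pk k) (μk k) with hγ
  set γ0 : E d := -Hp t0 x0 p0 μ0 with hγ0
  have hlam : ∀ (ν : ProbabilityMeasure (Tor d a × E d)), InPinf d R ν →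
      lam d q' ν ^ q' ≤ R ^ q' := fun ν hν =>
    Real.rpow_le_rpow (lam_nonneg _ _) (lam_le_of_inPinf hq0 hR.le hν) hq0.le
  have hRq0 : (0:ℝ) ≤ R ^ q' := Real.rpow_nonneg hR.le _
  set Rm : ℝ := Rbound q' C0 P (R ^ q') with hRm
  have hb : ∀ k, γ k ∈ Metric.closedBall (0 : E d) Rm := by
    intro k
    rw [Metric.mem_closedBall, dist_zero_right, hγ]
    simp only [norm_neg]
    exact Hp_norm_bound hq' hC0 hA2 hA4 hA5 (htk k) _ _ hP (hpk k) hRq0 (hlam _ (hμk k))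
  by_contra hcon
  rw [Metric.tendsto_atTop] at hcon
  push_neg at hcon
  obtain ⟨ε, hε, hfreq⟩ := hcon
  have hfreq' : ∃ᶠ k in Filter.atTop, ε ≤ dist (γ k) γ0 :=
    Filter.frequently_atTop.2 fun N => (hfreq N).imp (fun k ⟨h1, h2⟩ => ⟨h1, h2⟩)
  obtain ⟨φ, hφmono, hφ⟩ := Filter.extraction_of_frequently_atTop hfreq'
  obtain ⟨β, _hβmem, ψ, hψmono, hψc⟩ :=
    (isCompact_closedBall (0:E d) Rm).tendsto_subseq (fun k => hb (φ k))
  set ρ : ℕ → ℕ := φ ∘ ψ with hρ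
  have hρt : Filter.Tendsto ρ Filter.atTop Filter.atTop :=
    (hφmono.comp hψmono).tendsto_atTop
  have hγρ : Filter.Tendsto (fun k => γ (ρ k)) Filter.atTop (nhds β) := hψc
  have hLρ : ∀ (vk : ℕ → E d) (v : E d), Filter.Tendsto vk Filter.atTop (nhds v) →
      Filter.Tendsto (fun k => L (tk (ρ k)) (xk (ρ k)) (vk k) (μk (ρ k))) Filter.atTop
        (nhds (L t0 x0 v μ0)) := by
    intro vk v hv
    have := L_seq_tendsto (μk := fun k => μk (ρ k)) hA1 hR (fun k => htk (ρ k)) ht0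
      (htc.comp hρt) (zk := fun k => (xk (ρ k), vk k)) (z0 := (x0, v))
      ((hxc.comp hρt).prodMk_nhds hv) (fun k => hμk (ρ k)) hμ0 (hμc.comp hρt)
    exact this
  have hpρ : Filter.Tendsto (fun k => pk (ρ k)) Filter.atTop (nhds p0) := hpc.comp hρt
  have hβmax : ∀ v : E d, -⟪p0, v⟫_ℝ - L t0 x0 v μ0 ≤ -⟪p0, β⟫_ℝ - L t0 x0 β μ0 := by
    intro v
    have hk : ∀ k, -⟪pk (ρ k), v⟫_ℝ - L (tk (ρ k)) (xk (ρ k)) v (μk (ρ k))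
        ≤ -⟪pk (ρ k), γ (ρ k)⟫_ℝ - L (tk (ρ k)) (xk (ρ k)) (γ (ρ k)) (μk (ρ k)) :=
      fun k => (hA2 (tk (ρ k)) (xk (ρ k)) (pk (ρ k)) (μk (ρ k))).1 v
    have hlhs : Filter.Tendsto
        (fun k => -⟪pk (ρ k), v⟫_ℝ - L (tk (ρ k)) (xk (ρ k)) v (μk (ρ k)))
        Filter.atTop (nhds (-⟪p0, v⟫_ℝ - L t0 x0 v μ0)) :=
      ((hpρ.inner tendsto_const_nhds).neg).sub (hLρ (fun _ => v) v tendsto_const_nhds)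
    have hrhs : Filter.Tendsto
        (fun k => -⟪pk (ρ k), γ (ρ k)⟫_ℝ - L (tk (ρ k)) (xk (ρ k)) (γ (ρ k)) (μk (ρ k)))
        Filter.atTop (nhds (-⟪p0, β⟫_ℝ - L t0 x0 β μ0)) :=
      ((hpρ.inner hγρ).neg).sub (hLρ (fun k => γ (ρ k)) β hγρ)
    exact le_of_tendsto_of_tendsto' hlhs hrhs hk
  have hβeq : β = γ0 := (hA2 t0 x0 p0 μ0).2 β hβmax
  have hdist : Filter.Tendsto (fun k => dist (γ (ρ k)) γ0) Filter.atTop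
      (nhds (dist β γ0)) := hγρ.dist tendsto_const_nhds
  rw [hβeq, dist_self] at hdist
  have hεle : ε ≤ 0 := le_of_tendsto_of_tendsto' tendsto_const_nhds hdist
    (fun k => hφ (ψ k))
  linarith

/-- Continuity of the limit control. -/
lemma argmax_continuous (hq' : 1 < q') (hC0 : 0 < C0)
    (hA1 : A1T d a T L Lx Lα) (hA2 : A2T d a L Hp)
    (hA4 : A4T d a T q' C0 L) (hA5 : A5T d a T q' C0 L Lx)
    {R P : ℝ} (hR : 0 < R) (hP : 0 ≤ P)
    {t : ℝ} (ht : t ∈ Icc (0:ℝ) T) {pf : Tor d a → E d} (hpfc : Continuous pf)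
    (hpb : ∀ x, ‖pf x‖ ≤ P) {μv : ProbabilityMeasure (Tor d a × E d)}
    (hμv : InPinf d R μv) :
    Continuous (fun x => -Hp t x (pf x) μv) := by
  rw [continuous_iff_seqContinuous]
  intro xk x0 hxk
  exact argmax_tendsto hq' hC0 hA1 hA2 hA4 hA5 hR hP (fun _ => ht) ht
    tendsto_const_nhds hxk (fun k => hpb (xk k)) (hpb x0)
    ((hpfc.tendsto x0).comp hxk) (fun _ => hμv) hμv tendsto_const_nhds

end Main3
section Main4

variable {d : ℕ} {a T q' C0 : ℝ}
variable {L : ℝ → Tor d a → E d → ProbabilityMeasure (Tor d a × E d) → ℝ}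
variable {Lx Lα : ℝ → Tor d a → E d → ProbabilityMeasure (Tor d a × E d) → E d}
variable {Hp : ℝ → Tor d a → E d → ProbabilityMeasure (Tor d a × E d) → E d}

lemma tendstoUniformly_comp_tendsto_atTop {ι : Type} [Nonempty ι] [SemilatticeSup ι]
    {F : ℕ → Tor d a → E d} {f : Tor d a → E d}
    (h : TendstoUniformly F f Filter.atTop) {ρ : ι → ℕ}
    (hρ : Filter.Tendsto ρ Filter.atTop Filter.atTop) :
    TendstoUniformly (fun k => F (ρ k)) f Filter.atTop := by
  intro u hu
  exact hρ.eventually (h u hu)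

/-- Uniform closeness of `L` along convergent data, on the compact set of controls. -/
lemma unif_L_close (ha : 0 < a) (hA1 : A1T d a T L Lx Lα) {R : ℝ} (hR : 0 < R)
    {tk : ℕ → ℝ} {t0 : ℝ} (htk : ∀ k, tk k ∈ Icc (0:ℝ) T) (ht0 : t0 ∈ Icc (0:ℝ) T)
    (htc : Filter.Tendsto tk Filter.atTop (nhds t0))
    {νk : ℕ → ProbabilityMeasure (Tor d a × E d)} {μ0 : ProbabilityMeasure (Tor d a × E d)}
    (hνk : ∀ k, InPinf d R (νk k)) (hμ0 : InPinf d R μ0)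
    (hνc : Filter.Tendsto νk Filter.atTop (nhds μ0)) :
    ∀ ε > (0:ℝ), ∀ᶠ n in Filter.atTop, ∀ x : Tor d a,
      ∀ β ∈ Metric.closedBall (0:E d) R, |L (tk n) x β (νk n) - L t0 x β μ0| ≤ ε := by
  haveI : Fact (0 < a) := ⟨ha⟩
  intro ε hε
  by_contra hcon
  rw [Filter.not_eventually] at hcon
  have hcon' : ∃ᶠ n in Filter.atTop, ∃ x : Tor d a, ∃ β ∈ Metric.closedBall (0:E d) R,
      ε < |L (tk n) x β (νk n) - L t0 x β μ0| := by
    refine hcon.mono fun n hn => ?_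
    push_neg at hn
    exact hn
  obtain ⟨φ, hφmono, hφ⟩ := Filter.extraction_of_frequently_atTop hcon'
  choose xk βk hball hgt using hφ
  set zk : ℕ → Tor d a × E d := fun k => (xk k, βk k) with hzk
  have hmem : ∀ k, zk k ∈ (univ ×ˢ Metric.closedBall (0:E d) R : Set (Tor d a × E d)) :=
    fun k => ⟨mem_univ _, hball k⟩
  obtain ⟨z0, _hz0, ψ, hψmono, hψc⟩ :=
    (isCompact_univ.prod (isCompact_closedBall (0:E d) R)).tendsto_subseq hmem
  set ρ : ℕ → ℕ := φ ∘ ψ with hρ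
  have hρt : Filter.Tendsto ρ Filter.atTop Filter.atTop :=
    (hφmono.comp hψmono).tendsto_atTop
  have hzc : Filter.Tendsto (fun k => zk (ψ k)) Filter.atTop (nhds z0) := hψc
  have h1 : Filter.Tendsto
      (fun k => L (tk (ρ k)) (zk (ψ k)).1 (zk (ψ k)).2 (νk (ρ k))) Filter.atTop
      (nhds (L t0 z0.1 z0.2 μ0)) :=
    L_seq_tendsto hA1 hR (fun k => htk (ρ k)) ht0 (htc.comp hρt) hzc
      (fun k => hνk (ρ k)) hμ0 (hνc.comp hρt)
  have h2 : Filter.Tendsto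
      (fun k => L t0 (zk (ψ k)).1 (zk (ψ k)).2 μ0) Filter.atTop
      (nhds (L t0 z0.1 z0.2 μ0)) :=
    L_seq_tendsto hA1 hR (fun _ => ht0) ht0 tendsto_const_nhds hzc
      (fun _ => hμ0) hμ0 tendsto_const_nhds
  have h3 : Filter.Tendsto
      (fun k => |L (tk (ρ k)) (zk (ψ k)).1 (zk (ψ k)).2 (νk (ρ k))
        - L t0 (zk (ψ k)).1 (zk (ψ k)).2 μ0|) Filter.atTop (nhds 0) := by
    have := (h1.sub h2).abs
    rwa [sub_self, abs_zero] at this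
  have h4 : ε ≤ 0 := le_of_tendsto_of_tendsto' tendsto_const_nhds h3
    (fun k => le_of_lt (hgt (ψ k)))
  linarith

/-- The uniform modulus: a small optimality gap (w.r.t. the limit control `αl`) forces
closeness to `αl`. -/
lemma gap_modulus (ha : 0 < a) (hq' : 1 < q') (hC0 : 0 < C0)
    (hA1 : A1T d a T L Lx Lα) (hA2 : A2T d a L Hp)
    (hA4 : A4T d a T q' C0 L) (hA5 : A5T d a T q' C0 L Lx)
    {R : ℝ} (hR : 0 < R)
    {tk : ℕ → ℝ} {t0 : ℝ} (htk : ∀ k, tk k ∈ Icc (0:ℝ) T) (ht0 : t0 ∈ Icc (0:ℝ) T)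
    (htc : Filter.Tendsto tk Filter.atTop (nhds t0))
    {pk : ℕ → Tor d a → E d} {p0 : Tor d a → E d}
    (hpu : TendstoUniformly pk p0 Filter.atTop) (hp0c : Continuous p0)
    {νk : ℕ → ProbabilityMeasure (Tor d a × E d)} {μ0 : ProbabilityMeasure (Tor d a × E d)}
    (hνk : ∀ k, InPinf d R (νk k)) (hμ0 : InPinf d R μ0)
    (hνc : Filter.Tendsto νk Filter.atTop (nhds μ0))
    {αl : Tor d a → E d} (hαl : ∀ x, αl x = -Hp t0 x (p0 x) μ0) (hαlc : Continuous αl) :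
    ∀ ε > (0:ℝ), ∃ δ > (0:ℝ), ∀ᶠ n in Filter.atTop, ∀ x : Tor d a,
      ∀ β ∈ Metric.closedBall (0:E d) R,
      ((-⟪pk n x, αl x⟫_ℝ - L (tk n) x (αl x) (νk n))
        - (-⟪pk n x, β⟫_ℝ - L (tk n) x β (νk n)) ≤ δ) → ‖β - αl x‖ ≤ ε := by
  haveI : Fact (0 < a) := ⟨ha⟩
  intro ε hε
  by_contra hcon
  push_neg at hcon
  have hfreq : ∀ j : ℕ, ∃ᶠ n in Filter.atTop, ∃ x : Tor d a,
      ∃ β ∈ Metric.closedBall (0:E d) R,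
      ((-⟪pk n x, αl x⟫_ℝ - L (tk n) x (αl x) (νk n))
        - (-⟪pk n x, β⟫_ℝ - L (tk n) x β (νk n)) ≤ 1/(j+1)) ∧ ε < ‖β - αl x‖ := by
    intro j
    have hδ : (0:ℝ) < 1/(j+1) := by positivity
    have := hcon (1/(j+1)) hδ
    exact this
  obtain ⟨φ, hφmono, hφ⟩ := Filter.extraction_forall_of_frequently hfreq
  choose xk βk hball hgap hfar using hφ
  set zk : ℕ → Tor d a × E d := fun k => (xk k, βk k) with hzk
  have hmem : ∀ k, zk k ∈ (univ ×ˢ Metric.closedBall (0:E d) R : Set (Tor d a × E d)) :=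
    fun k => ⟨mem_univ _, hball k⟩
  obtain ⟨z0, _hz0, ψ, hψmono, hψc⟩ :=
    (isCompact_univ.prod (isCompact_closedBall (0:E d) R)).tendsto_subseq hmem
  set ρ : ℕ → ℕ := φ ∘ ψ with hρdef
  have hρt : Filter.Tendsto ρ Filter.atTop Filter.atTop :=
    (hφmono.comp hψmono).tendsto_atTop
  have hxx : Filter.Tendsto (fun k => (zk (ψ k)).1) Filter.atTop (nhds z0.1) :=
    (continuous_fst.tendsto _).comp hψc
  have hbb : Filter.Tendsto (fun k => (zk (ψ k)).2) Filter.atTop (nhds z0.2) :=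
    (continuous_snd.tendsto _).comp hψc
  -- convergence of the p-values
  have hpv : Filter.Tendsto (fun k => pk (ρ k) ((zk (ψ k)).1)) Filter.atTop
      (nhds (p0 z0.1)) :=
    (tendstoUniformly_comp_tendsto_atTop hpu hρt).tendsto_comp hp0c.continuousAt hxx
  have hαv : Filter.Tendsto (fun k => αl ((zk (ψ k)).1)) Filter.atTop
      (nhds (αl z0.1)) := (hαlc.tendsto _).comp hxx
  -- convergence of the L-values
  have hL1 : Filter.Tendsto
      (fun k => L (tk (ρ k)) ((zk (ψ k)).1) (αl ((zk (ψ k)).1)) (νk (ρ k)))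
      Filter.atTop (nhds (L t0 z0.1 (αl z0.1) μ0)) :=
    L_seq_tendsto hA1 hR (fun k => htk (ρ k)) ht0 (htc.comp hρt)
      (zk := fun k => ((zk (ψ k)).1, αl ((zk (ψ k)).1))) (z0 := (z0.1, αl z0.1))
      (hxx.prodMk_nhds hαv) (fun k => hνk (ρ k)) hμ0 (hνc.comp hρt)
  have hL2 : Filter.Tendsto
      (fun k => L (tk (ρ k)) ((zk (ψ k)).1) ((zk (ψ k)).2) (νk (ρ k)))
      Filter.atTop (nhds (L t0 z0.1 z0.2 μ0)) :=
    L_seq_tendsto hA1 hR (fun k => htk (ρ k)) ht0 (htc.comp hρt)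
      (zk := fun k => ((zk (ψ k)).1, (zk (ψ k)).2)) (z0 := (z0.1, z0.2))
      (hxx.prodMk_nhds hbb) (fun k => hνk (ρ k)) hμ0 (hνc.comp hρt)
  -- the gap converges
  have hGt : Filter.Tendsto
      (fun k => (-⟪pk (ρ k) ((zk (ψ k)).1), αl ((zk (ψ k)).1)⟫_ℝ
          - L (tk (ρ k)) ((zk (ψ k)).1) (αl ((zk (ψ k)).1)) (νk (ρ k)))
        - (-⟪pk (ρ k) ((zk (ψ k)).1), (zk (ψ k)).2⟫_ℝ
          - L (tk (ρ k)) ((zk (ψ k)).1) ((zk (ψ k)).2) (νk (ρ k)))) Filter.atTop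
      (nhds ((-⟪p0 z0.1, αl z0.1⟫_ℝ - L t0 z0.1 (αl z0.1) μ0)
        - (-⟪p0 z0.1, z0.2⟫_ℝ - L t0 z0.1 z0.2 μ0))) :=
    (((hpv.inner hαv).neg).sub hL1).sub (((hpv.inner hbb).neg).sub hL2)
  have hub : Filter.Tendsto (fun k => 1/((ψ k : ℝ)+1)) Filter.atTop (nhds 0) := by
    have h0 : Filter.Tendsto (fun j : ℕ => 1/((j:ℝ)+1)) Filter.atTop (nhds 0) :=
      tendsto_one_div_add_atTop_nhds_zero_nat
    exact h0.comp hψmono.tendsto_atTop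
  have hGle : ((-⟪p0 z0.1, αl z0.1⟫_ℝ - L t0 z0.1 (αl z0.1) μ0)
      - (-⟪p0 z0.1, z0.2⟫_ℝ - L t0 z0.1 z0.2 μ0)) ≤ 0 := by
    have := le_of_tendsto_of_tendsto' hGt hub (fun k => ?_)
    · linarith [this]
    · exact hgap (ψ k)
  -- z0.2 is a maximizer, hence equals αl z0.1
  have hmax0 := (hA2 t0 z0.1 (p0 z0.1) μ0).1
  have hβmax : ∀ v : E d, -⟪p0 z0.1, v⟫_ℝ - L t0 z0.1 v μ0
      ≤ -⟪p0 z0.1, z0.2⟫_ℝ - L t0 z0.1 z0.2 μ0 := by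
    intro v
    have h1 := hmax0 v
    rw [← hαl z0.1] at h1
    have h2 : -⟪p0 z0.1, αl z0.1⟫_ℝ - L t0 z0.1 (αl z0.1) μ0
        ≤ -⟪p0 z0.1, z0.2⟫_ℝ - L t0 z0.1 z0.2 μ0 := by linarith [hGle]
    linarith
  have hβeq : z0.2 = αl z0.1 := by
    rw [hαl z0.1]
    exact (hA2 t0 z0.1 (p0 z0.1) μ0).2 z0.2 hβmax
  -- contradiction with hfar
  have hdist : Filter.Tendsto (fun k => ‖(zk (ψ k)).2 - αl ((zk (ψ k)).1)‖)
      Filter.atTop (nhds ‖z0.2 - αl z0.1‖) := (hbb.sub hαv).norm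
  rw [hβeq, sub_self, norm_zero] at hdist
  have : ε ≤ 0 := le_of_tendsto_of_tendsto' tendsto_const_nhds hdist
    (fun k => le_of_lt (hfar (ψ k)))
  linarith

end Main4
section Main5

variable {d : ℕ} {a T q' C0 : ℝ}
variable {L : ℝ → Tor d a → E d → ProbabilityMeasure (Tor d a × E d) → ℝ}
variable {Lx Lα : ℝ → Tor d a → E d → ProbabilityMeasure (Tor d a × E d) → E d}
variable {Hp : ℝ → Tor d a → E d → ProbabilityMeasure (Tor d a × E d) → E d}

/-- The monotonicity (A3) exchange inequality: the average σ-gap of the fixed-point control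
is nonpositive. -/
lemma a3_exchange (hq' : 1 < q') (hC0 : 0 < C0)
    (hA1 : A1T d a T L Lx Lα) (hA2 : A2T d a L Hp) (hA3 : A3T d a T L)
    (hA4 : A4T d a T q' C0 L) (hA5 : A5T d a T q' C0 L Lx)
    {t : ℝ} (ht : t ∈ Icc (0:ℝ) T) {mm : ProbabilityMeasure (Tor d a)}
    {pf : Tor d a → E d} (hpfc : Continuous pf)
    {μv : ProbabilityMeasure (Tor d a × E d)}
    (hfp : IsFPT d a Hp t mm pf μv) {P : ℝ} (hP : 0 ≤ P) (hpb : ∀ x, ‖pf x‖ ≤ P)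
    {σ : ProbabilityMeasure (Tor d a × E d)} {αl : Tor d a → E d}
    (hαlc : Continuous αl) {R : ℝ} (hRge : Rbound q' C0 P (Istar q' C0 P) ≤ R)
    (hαlb : ∀ x, ‖αl x‖ ≤ R)
    (hσ : (σ : MeasureTheory.Measure (Tor d a × E d))
      = (mm : MeasureTheory.Measure (Tor d a)).map (fun x => (x, αl x)))
    (hσsup : InPinf d R σ) :
    ∫ x, ((-⟪pf x, αl x⟫_ℝ - L t x (αl x) σ)
        - (-⟪pf x, -Hp t x (pf x) μv⟫_ℝ - L t x (-Hp t x (pf x) μv) σ))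
      ∂(mm : MeasureTheory.Measure (Tor d a)) ≤ 0 := by
  have hq0 : (0:ℝ) < q' := lt_trans zero_lt_one hq'
  have hR : 0 < R := lt_of_lt_of_le Rbound_pos hRge
  obtain ⟨hαnb0, hμsup0, hαnae⟩ := fp_all_bounds hq' hC0 hA1 hA2 hA3 hA4 hA5 ht hfp hP hpb
  set αn : Tor d a → E d := fun x => -Hp t x (pf x) μv with hαn
  have hαnb : ∀ x, ‖αn x‖ ≤ R := fun x => le_trans (hαnb0 x) hRge
  have hμsup : InPinf d R μv := InPinf_mono hμsup0 hRge
  have hαlae : AEMeasurable αl (mm : MeasureTheory.Measure (Tor d a)) :=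
    hαlc.measurable.aemeasurable
  -- slice continuity
  have hgσ : Continuous (fun z : Tor d a × E d => L t z.1 z.2 σ) :=
    L_slice_continuous hA1 hR ht hσsup
  have hgμ : Continuous (fun z : Tor d a × E d => L t z.1 z.2 μv) :=
    L_slice_continuous hA1 hR ht hμsup
  -- L bounds
  have hlamσ : lam d q' σ ^ q' ≤ R ^ q' :=
    Real.rpow_le_rpow (lam_nonneg _ _) (lam_le_of_inPinf hq0 hR.le hσsup) hq0.le
  have hlamμ : lam d q' μv ^ q' ≤ R ^ q' :=
    Real.rpow_le_rpow (lam_nonneg _ _) (lam_le_of_inPinf hq0 hR.le hμsup) hq0.le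
  set BL : ℝ := C0 * (1 + R ^ q' + R ^ q') with hBL
  have hLb : ∀ (ν : ProbabilityMeasure (Tor d a × E d)), lam d q' ν ^ q' ≤ R ^ q' →
      ∀ (x : Tor d a) (β : E d), ‖β‖ ≤ R → |L t x β ν| ≤ BL := by
    intro ν hν x β hβ
    refine le_trans ((hA5 t ht x β ν).1) ?_
    apply mul_le_mul_of_nonneg_left _ hC0.le
    have : ‖β‖ ^ q' ≤ R ^ q' := Real.rpow_le_rpow (norm_nonneg _) hβ hq0.le
    linarith
  -- the six component functions and their integrability
  have hic : Continuous (fun z : Tor d a × E d => ⟪pf z.1, z.2⟫_ℝ) :=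
    (hpfc.comp continuous_fst).inner continuous_snd
  have hib : ∀ (x : Tor d a) (β : E d), ‖β‖ ≤ R → |⟪pf x, β⟫_ℝ| ≤ P * R := by
    intro x β hβ
    refine le_trans (abs_real_inner_le_norm _ _) ?_
    exact mul_le_mul (hpb x) hβ (norm_nonneg _) hP
  have hint_i1 : MeasureTheory.Integrable (fun x => ⟪pf x, αn x⟫_ℝ)
      (mm : MeasureTheory.Measure (Tor d a)) :=
    comp_pair_integrable hαnae hic (fun x => hib x _ (hαnb x))
  have hint_i2 : MeasureTheory.Integrable (fun x => ⟪pf x, αl x⟫_ℝ)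
      (mm : MeasureTheory.Measure (Tor d a)) :=
    comp_pair_integrable hαlae hic (fun x => hib x _ (hαlb x))
  have hint_f1 : MeasureTheory.Integrable (fun x => L t x (αn x) σ)
      (mm : MeasureTheory.Measure (Tor d a)) :=
    comp_pair_integrable hαnae hgσ (fun x => hLb σ hlamσ x _ (hαnb x))
  have hint_f2 : MeasureTheory.Integrable (fun x => L t x (αl x) σ)
      (mm : MeasureTheory.Measure (Tor d a)) :=
    comp_pair_integrable hαlae hgσ (fun x => hLb σ hlamσ x _ (hαlb x))
  have hint_f3 : MeasureTheory.Integrable (fun x => L t x (αn x) μv)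
      (mm : MeasureTheory.Measure (Tor d a)) :=
    comp_pair_integrable hαnae hgμ (fun x => hLb μv hlamμ x _ (hαnb x))
  have hint_f4 : MeasureTheory.Integrable (fun x => L t x (αl x) μv)
      (mm : MeasureTheory.Measure (Tor d a)) :=
    comp_pair_integrable hαlae hgμ (fun x => hLb μv hlamμ x _ (hαlb x))
  -- A3
  have hA3' := hA3 t ht σ μv
  have hrw1 : ∫ z : Tor d a × E d, (L t z.1 z.2 σ - L t z.1 z.2 μv)
      ∂(σ : MeasureTheory.Measure (Tor d a × E d))
      = (∫ x, L t x (αl x) σ ∂(mm : MeasureTheory.Measure (Tor d a)))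
        - ∫ x, L t x (αl x) μv ∂(mm : MeasureTheory.Measure (Tor d a)) := by
    rw [hσ, integral_map_pair (g := fun z : Tor d a × E d => L t z.1 z.2 σ - L t z.1 z.2 μv) hαlae (hgσ.sub hgμ).aestronglyMeasurable]
    exact MeasureTheory.integral_sub hint_f2 hint_f4
  have hrw2 : ∫ z : Tor d a × E d, (L t z.1 z.2 σ - L t z.1 z.2 μv)
      ∂(μv : MeasureTheory.Measure (Tor d a × E d))
      = (∫ x, L t x (αn x) σ ∂(mm : MeasureTheory.Measure (Tor d a)))
        - ∫ x, L t x (αn x) μv ∂(mm : MeasureTheory.Measure (Tor d a)) := by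
    rw [show (μv : MeasureTheory.Measure (Tor d a × E d))
        = (mm : MeasureTheory.Measure (Tor d a)).map (fun x => (x, αn x)) from hfp,
      integral_map_pair (g := fun z : Tor d a × E d => L t z.1 z.2 σ - L t z.1 z.2 μv) hαnae (hgσ.sub hgμ).aestronglyMeasurable]
    exact MeasureTheory.integral_sub hint_f1 hint_f3
  rw [hrw1, hrw2] at hA3'
  -- the g part is pointwise nonnegative
  have hgpt : ∀ x, 0 ≤ ((-⟪pf x, αn x⟫_ℝ - L t x (αn x) μv)
      - (-⟪pf x, αl x⟫_ℝ - L t x (αl x) μv)) := by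
    intro x
    have := (hA2 t x (pf x) μv).1 (αl x)
    simp only [hαn]
    linarith
  have hni1 : MeasureTheory.Integrable (fun x => -⟪pf x, αn x⟫_ℝ)
      (mm : MeasureTheory.Measure (Tor d a)) := hint_i1.neg
  have hni2 : MeasureTheory.Integrable (fun x => -⟪pf x, αl x⟫_ℝ)
      (mm : MeasureTheory.Measure (Tor d a)) := hint_i2.neg
  have hc1 : MeasureTheory.Integrable (fun x => -⟪pf x, αn x⟫_ℝ - L t x (αn x) μv)
      (mm : MeasureTheory.Measure (Tor d a)) := hni1.sub hint_f3
  have hc2 : MeasureTheory.Integrable (fun x => -⟪pf x, αl x⟫_ℝ - L t x (αl x) μv)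
      (mm : MeasureTheory.Measure (Tor d a)) := hni2.sub hint_f4
  have hc3 : MeasureTheory.Integrable (fun x => -⟪pf x, αl x⟫_ℝ - L t x (αl x) σ)
      (mm : MeasureTheory.Measure (Tor d a)) := hni2.sub hint_f2
  have hc4 : MeasureTheory.Integrable (fun x => -⟪pf x, αn x⟫_ℝ - L t x (αn x) σ)
      (mm : MeasureTheory.Measure (Tor d a)) := hni1.sub hint_f1
  have hgint : MeasureTheory.Integrable
      (fun x => ((-⟪pf x, αn x⟫_ℝ - L t x (αn x) μv)
        - (-⟪pf x, αl x⟫_ℝ - L t x (αl x) μv)))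
      (mm : MeasureTheory.Measure (Tor d a)) :=
    hc1.sub hc2
  have hgnn : 0 ≤ ∫ x, ((-⟪pf x, αn x⟫_ℝ - L t x (αn x) μv)
      - (-⟪pf x, αl x⟫_ℝ - L t x (αl x) μv))
      ∂(mm : MeasureTheory.Measure (Tor d a)) :=
    MeasureTheory.integral_nonneg hgpt
  have hgval : ∫ x, ((-⟪pf x, αn x⟫_ℝ - L t x (αn x) μv)
      - (-⟪pf x, αl x⟫_ℝ - L t x (αl x) μv))
      ∂(mm : MeasureTheory.Measure (Tor d a))
      = (-(∫ x, ⟪pf x, αn x⟫_ℝ ∂(mm : MeasureTheory.Measure (Tor d a)))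
          - ∫ x, L t x (αn x) μv ∂(mm : MeasureTheory.Measure (Tor d a)))
        - (-(∫ x, ⟪pf x, αl x⟫_ℝ ∂(mm : MeasureTheory.Measure (Tor d a)))
          - ∫ x, L t x (αl x) μv ∂(mm : MeasureTheory.Measure (Tor d a))) := by
    rw [MeasureTheory.integral_sub hc1 hc2,
      MeasureTheory.integral_sub hni1 hint_f3,
      MeasureTheory.integral_sub hni2 hint_f4,
      MeasureTheory.integral_neg, MeasureTheory.integral_neg]
  have hbval : ∫ x, ((-⟪pf x, αl x⟫_ℝ - L t x (αl x) σ)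
      - (-⟪pf x, αn x⟫_ℝ - L t x (αn x) σ))
      ∂(mm : MeasureTheory.Measure (Tor d a))
      = (-(∫ x, ⟪pf x, αl x⟫_ℝ ∂(mm : MeasureTheory.Measure (Tor d a)))
          - ∫ x, L t x (αl x) σ ∂(mm : MeasureTheory.Measure (Tor d a)))
        - (-(∫ x, ⟪pf x, αn x⟫_ℝ ∂(mm : MeasureTheory.Measure (Tor d a)))
          - ∫ x, L t x (αn x) σ ∂(mm : MeasureTheory.Measure (Tor d a))) := by
    rw [MeasureTheory.integral_sub hc3 hc4,
      MeasureTheory.integral_sub hni2 hint_f2,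
      MeasureTheory.integral_sub hni1 hint_f1,
      MeasureTheory.integral_neg, MeasureTheory.integral_neg]
  rw [hgval] at hgnn
  rw [show (fun x => ((-⟪pf x, αl x⟫_ℝ - L t x (αl x) σ)
      - (-⟪pf x, -Hp t x (pf x) μv⟫_ℝ - L t x (-Hp t x (pf x) μv) σ)))
    = (fun x => ((-⟪pf x, αl x⟫_ℝ - L t x (αl x) σ)
      - (-⟪pf x, αn x⟫_ℝ - L t x (αn x) σ))) from rfl, hbval]
  linarith

end Main5
section Main6

variable {d : ℕ} {a : ℝ}

/-- Uniform continuity of a bounded continuous function in its second (control) argument,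
uniformly over the torus and a ball of controls. -/
lemma unif_cont_second (ha : 0 < a) {R : ℝ} (hR : 0 < R)
    (f : BoundedContinuousFunction (Tor d a × E d) ℝ) :
    ∀ η > (0:ℝ), ∃ ε > (0:ℝ), ∀ x : Tor d a, ∀ β1 β2 : E d, ‖β1‖ ≤ R → ‖β2‖ ≤ R →
      ‖β1 - β2‖ ≤ ε → |f (x, β1) - f (x, β2)| ≤ η := by
  haveI : Fact (0 < a) := ⟨ha⟩
  intro η hη
  by_contra hcon
  push_neg at hcon
  have hfreq : ∀ j : ℕ, ∃ x : Tor d a, ∃ β1 β2 : E d, ‖β1‖ ≤ R ∧ ‖β2‖ ≤ R ∧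
      ‖β1 - β2‖ ≤ 1/(j+1) ∧ η < |f (x, β1) - f (x, β2)| := by
    intro j
    obtain ⟨x, β1, β2, h1, h2, h3, h4⟩ := hcon (1/(j+1)) (by positivity)
    exact ⟨x, β1, β2, h1, h2, h3, h4⟩
  choose xk β1k β2k hb1 hb2 hcl hfar using hfreq
  set zk : ℕ → Tor d a × E d × E d := fun k => (xk k, β1k k, β2k k) with hzk
  have hmem : ∀ k, zk k ∈ (univ ×ˢ (Metric.closedBall (0:E d) R ×ˢ
      Metric.closedBall (0:E d) R) : Set (Tor d a × E d × E d)) := by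
    intro k
    refine ⟨mem_univ _, ?_, ?_⟩ <;>
      simp only [Metric.mem_closedBall, dist_zero_right]
    exacts [hb1 k, hb2 k]
  obtain ⟨z0, _hz0, ψ, hψmono, hψc⟩ :=
    (isCompact_univ.prod ((isCompact_closedBall (0:E d) R).prod
      (isCompact_closedBall (0:E d) R))).tendsto_subseq hmem
  have hx : Filter.Tendsto (fun k => (zk (ψ k)).1) Filter.atTop (nhds z0.1) :=
    (continuous_fst.tendsto _).comp hψc
  have hb1c : Filter.Tendsto (fun k => (zk (ψ k)).2.1) Filter.atTop (nhds z0.2.1) :=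
    ((continuous_fst.comp continuous_snd).tendsto _).comp hψc
  have hb2c : Filter.Tendsto (fun k => (zk (ψ k)).2.2) Filter.atTop (nhds z0.2.2) :=
    ((continuous_snd.comp continuous_snd).tendsto _).comp hψc
  have hub : Filter.Tendsto (fun k => 1/((ψ k : ℝ)+1)) Filter.atTop (nhds 0) :=
    tendsto_one_div_add_atTop_nhds_zero_nat.comp hψmono.tendsto_atTop
  have heq : z0.2.1 = z0.2.2 := by
    have h1 : Filter.Tendsto (fun k => ‖(zk (ψ k)).2.1 - (zk (ψ k)).2.2‖) Filter.atTop
        (nhds ‖z0.2.1 - z0.2.2‖) := (hb1c.sub hb2c).norm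
    have h2 : ‖z0.2.1 - z0.2.2‖ ≤ 0 :=
      le_of_tendsto_of_tendsto' h1 hub (fun k => hcl (ψ k))
    rw [← sub_eq_zero]
    exact norm_le_zero_iff.mp h2
  have hΦ : Filter.Tendsto
      (fun k => |f ((zk (ψ k)).1, (zk (ψ k)).2.1) - f ((zk (ψ k)).1, (zk (ψ k)).2.2)|)
      Filter.atTop (nhds |f (z0.1, z0.2.1) - f (z0.1, z0.2.2)|) := by
    have hf1 : Filter.Tendsto (fun k => f ((zk (ψ k)).1, (zk (ψ k)).2.1)) Filter.atTop
        (nhds (f (z0.1, z0.2.1))) :=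
      (f.continuous.tendsto _).comp (hx.prodMk_nhds hb1c)
    have hf2 : Filter.Tendsto (fun k => f ((zk (ψ k)).1, (zk (ψ k)).2.2)) Filter.atTop
        (nhds (f (z0.1, z0.2.2))) :=
      (f.continuous.tendsto _).comp (hx.prodMk_nhds hb2c)
    exact (hf1.sub hf2).abs
  rw [heq, sub_self, abs_zero] at hΦ
  have : η ≤ 0 := le_of_tendsto_of_tendsto' tendsto_const_nhds hΦ
    (fun k => le_of_lt (hfar (ψ k)))
  linarith

end Main6

set_option maxHeartbeats 2000000 in
/-- Stability of the fixed point in the joint law of states and controls: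
under (A1)–(A5) on the torus `T^d_a`, if `tⁿ → t`, `pⁿ → p` uniformly and `mⁿ → m` weakly-*,
and if `μⁿ` (resp. `μ`) is the unique solution of the fixed point relation
`μⁿ = (Id, −H_p(tⁿ,·,pⁿ(·),μⁿ))#mⁿ` (resp. for `(t,m,p)`), then `μⁿ → μ` in the weak-*
topology. -/
theorem stability_fixed_point
    (d : ℕ) (hd : 1 ≤ d) (a T q' C0 : ℝ)
    (ha : 0 < a) (hT : 0 < T) (hq' : 1 < q') (hC0 : 0 < C0)
    (L : ℝ → Tor d a → E d → ProbabilityMeasure (Tor d a × E d) → ℝ)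
    (Lx Lα : ℝ → Tor d a → E d → ProbabilityMeasure (Tor d a × E d) → E d)
    (Hp : ℝ → Tor d a → E d → ProbabilityMeasure (Tor d a × E d) → E d)
    (hA1 : A1T d a T L Lx Lα)
    (hA2 : A2T d a L Hp)
    (hA3 : A3T d a T L)
    (hA4 : A4T d a T q' C0 L)
    (hA5 : A5T d a T q' C0 L Lx)
    (tseq : ℕ → ℝ) (t : ℝ) (htseq : ∀ n, tseq n ∈ Icc (0 : ℝ) T) (ht : t ∈ Icc (0 : ℝ) T)
    (htconv : Filter.Tendsto tseq Filter.atTop (nhds t))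
    (pseq : ℕ → Tor d a → E d) (p : Tor d a → E d)
    (hpseqc : ∀ n, Continuous (pseq n)) (hpc : Continuous p)
    (hpconv : TendstoUniformly pseq p Filter.atTop)
    (mseq : ℕ → ProbabilityMeasure (Tor d a)) (m : ProbabilityMeasure (Tor d a))
    (hmconv : Filter.Tendsto mseq Filter.atTop (nhds m))
    (μseq : ℕ → ProbabilityMeasure (Tor d a × E d)) (μ : ProbabilityMeasure (Tor d a × E d))
    (hμseq : ∀ n, IsFPT d a Hp (tseq n) (mseq n) (pseq n) (μseq n))
    (hμ : IsFPT d a Hp t m p μ) :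
    Filter.Tendsto μseq Filter.atTop (nhds μ) := by
  classical
  haveI : Fact (0 < a) := ⟨ha⟩
  have hq0 : (0:ℝ) < q' := lt_trans zero_lt_one hq'
  -- a uniform bound on the momenta
  obtain ⟨P0, hP0⟩ := (isCompact_univ (X := Tor d a)).exists_bound_of_continuousOn
    hpc.continuousOn
  set P : ℝ := max P0 0 + 1 with hPdef
  have hmax0 : (0:ℝ) ≤ max P0 0 := le_max_right _ _
  have hP : 0 ≤ P := by rw [hPdef]; linarith
  have hpb : ∀ x, ‖p x‖ ≤ P := by
    intro x
    have := hP0 x (mem_univ x)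
    have h2 : P0 ≤ max P0 0 := le_max_left _ _
    rw [hPdef]; linarith
  have hpbev : ∀ᶠ n in Filter.atTop, ∀ x, ‖pseq n x‖ ≤ P := by
    have h1 := (Metric.tendstoUniformly_iff.1 hpconv) 1 zero_lt_one
    refine h1.mono fun n hn x => ?_
    have h2 := hn x
    rw [dist_comm, dist_eq_norm] at h2
    calc ‖pseq n x‖ = ‖p x + (pseq n x - p x)‖ := by
          have e : p x + (pseq n x - p x) = pseq n x := by abel
          rw [e]
      _ ≤ ‖p x‖ + ‖pseq n x - p x‖ := norm_add_le _ _
      _ ≤ P := by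
          have h3 := hpb x
          rw [hPdef] at h3 ⊢
          have h4 : ‖p x‖ ≤ max P0 0 := by
            have := hP0 x (mem_univ x); exact le_trans this (le_max_left _ _)
          linarith
  -- the limit control and its properties
  set R : ℝ := Rbound q' C0 P (Istar q' C0 P) with hRdef
  have hR : 0 < R := Rbound_pos
  obtain ⟨hαlb, hμsup, hαlae⟩ :=
    fp_all_bounds hq' hC0 hA1 hA2 hA3 hA4 hA5 ht hμ hP hpb
  set αl : Tor d a → E d := fun x => -Hp t x (p x) μ with hαldef
  have hαlc : Continuous αl :=
    argmax_continuous hq' hC0 hA1 hA2 hA4 hA5 hR hP ht hpc hpb hμsup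
  have hGc : Continuous (fun x : Tor d a => (x, αl x)) := continuous_id.prodMk hαlc
  -- the comparison measures σ n
  set σ : ℕ → ProbabilityMeasure (Tor d a × E d) :=
    fun n => (mseq n).map hGc.measurable.aemeasurable with hσdef
  have hσcoe : ∀ n, (σ n : MeasureTheory.Measure (Tor d a × E d))
      = (mseq n : MeasureTheory.Measure (Tor d a)).map (fun x => (x, αl x)) := fun n => rfl
  have hμeq : μ = ProbabilityMeasure.map m hGc.measurable.aemeasurable :=
    ProbabilityMeasure.toMeasure_injective hμ
  have hσconv : Filter.Tendsto σ Filter.atTop (nhds μ) := by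
    rw [hμeq]
    exact ProbabilityMeasure.tendsto_map_of_tendsto_of_continuous mseq m hmconv hGc
  have hσsup : ∀ n, InPinf d R (σ n) := by
    intro n
    unfold InPinf
    rw [hσcoe n]
    exact map_pair_support hαlc.measurable.aemeasurable hαlb
  -- main convergence statement, via test functions
  rw [MeasureTheory.ProbabilityMeasure.tendsto_iff_forall_integral_tendsto]
  intro f
  have hμint : ∫ z, f z ∂(μ : MeasureTheory.Measure (Tor d a × E d))
      = ∫ x, f (x, αl x) ∂(m : MeasureTheory.Measure (Tor d a)) := by
    rw [show (μ : MeasureTheory.Measure (Tor d a × E d))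
      = (m : MeasureTheory.Measure (Tor d a)).map (fun x => (x, αl x)) from hμ]
    exact integral_map_pair hαlae f.continuous.aestronglyMeasurable
  have hconv1 : Filter.Tendsto
      (fun n => ∫ x, f (x, αl x) ∂(mseq n : MeasureTheory.Measure (Tor d a)))
      Filter.atTop (nhds (∫ x, f (x, αl x) ∂(m : MeasureTheory.Measure (Tor d a)))) := by
    have h1 := (MeasureTheory.ProbabilityMeasure.tendsto_iff_forall_integral_tendsto.1
      hmconv) (f.compContinuous ⟨fun x : Tor d a => (x, αl x), hGc⟩)
    simpa only [BoundedContinuousFunction.compContinuous_apply, ContinuousMap.coe_mk]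
      using h1
  rw [Metric.tendsto_nhds]
  intro η hη
  -- bound for f
  set Bf : ℝ := ‖f‖ with hBfdef
  have hBf : 0 ≤ Bf := norm_nonneg _
  have hfb : ∀ z : Tor d a × E d, |f z| ≤ Bf := fun z => by
    have := f.norm_coe_le_norm z
    rwa [Real.norm_eq_abs] at this
  -- uniform continuity modulus
  obtain ⟨ε₁, hε₁, hmodf⟩ := unif_cont_second ha hR f (η/4) (by positivity)
  -- gap modulus
  obtain ⟨δ, hδ, hgapev⟩ := gap_modulus ha hq' hC0 hA1 hA2 hA4 hA5 hR htseq ht htconv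
    hpconv hpc hσsup hμsup hσconv (αl := αl) (fun _ => rfl) hαlc ε₁ hε₁
  -- the small parameter
  set ε' : ℝ := δ * η / (8 * (Bf + 1)) with hε'def
  have hε' : 0 < ε' := by rw [hε'def]; positivity
  -- closeness of L and p
  have hLclose := unif_L_close ha hA1 hR htseq ht htconv hσsup hμsup hσconv (ε'/4)
    (by positivity)
  have hpclose : ∀ᶠ n in Filter.atTop, ∀ x, dist (p x) (pseq n x) < ε'/(4*R) :=
    (Metric.tendstoUniformly_iff.1 hpconv) _ (by positivity)
  have hconv1ev := (Metric.tendsto_nhds.1 hconv1) (η/4) (by positivity)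
  filter_upwards [hpbev, hLclose, hpclose, hgapev, hconv1ev] with n h1 h2 h3 h4 h5
  -- fixed point bounds at index n
  obtain ⟨hαnb, hμnsup, hαnae⟩ :=
    fp_all_bounds hq' hC0 hA1 hA2 hA3 hA4 hA5 (htseq n) (hμseq n) hP h1
  set αn : Tor d a → E d := fun x => -Hp (tseq n) x (pseq n x) (μseq n) with hαndef
  -- the gap function b
  set b : Tor d a → ℝ := fun x =>
    (-⟪pseq n x, αl x⟫_ℝ - L (tseq n) x (αl x) (σ n))
      - (-⟪pseq n x, αn x⟫_ℝ - L (tseq n) x (αn x) (σ n)) with hbdef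
  -- integral of b is nonpositive
  have hbint_le : ∫ x, b x ∂(mseq n : MeasureTheory.Measure (Tor d a)) ≤ 0 :=
    a3_exchange hq' hC0 hA1 hA2 hA3 hA4 hA5 (htseq n) (hpseqc n) (hμseq n) hP h1
      hαlc le_rfl hαlb (hσcoe n) (hσsup n)
  -- integrability of b
  have hgσn : Continuous (fun z : Tor d a × E d => L (tseq n) z.1 z.2 (σ n)) :=
    L_slice_continuous hA1 hR (htseq n) (hσsup n)
  have hBc : Continuous (fun z : Tor d a × E d =>
      (-⟪pseq n z.1, αl z.1⟫_ℝ - L (tseq n) z.1 (αl z.1) (σ n))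
        - (-⟪pseq n z.1, z.2⟫_ℝ - L (tseq n) z.1 z.2 (σ n))) := by
    have hc1 : Continuous (fun z : Tor d a × E d => ⟪pseq n z.1, αl z.1⟫_ℝ) :=
      ((hpseqc n).comp continuous_fst).inner (hαlc.comp continuous_fst)
    have hc2 : Continuous (fun z : Tor d a × E d => L (tseq n) z.1 (αl z.1) (σ n)) :=
      hgσn.comp (continuous_fst.prodMk (hαlc.comp continuous_fst))
    have hc3 : Continuous (fun z : Tor d a × E d => ⟪pseq n z.1, z.2⟫_ℝ) :=
      ((hpseqc n).comp continuous_fst).inner continuous_snd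
    exact (hc1.neg.sub hc2).sub (hc3.neg.sub hgσn)
  have hlamσn : lam d q' (σ n) ^ q' ≤ R ^ q' :=
    Real.rpow_le_rpow (lam_nonneg _ _) (lam_le_of_inPinf hq0 hR.le (hσsup n)) hq0.le
  have hLbn : ∀ (x : Tor d a) (β : E d), ‖β‖ ≤ R →
      |L (tseq n) x β (σ n)| ≤ C0 * (1 + R ^ q' + R ^ q') := by
    intro x β hβ
    refine le_trans ((hA5 (tseq n) (htseq n) x β (σ n)).1) ?_
    apply mul_le_mul_of_nonneg_left _ hC0.le
    have : ‖β‖ ^ q' ≤ R ^ q' := Real.rpow_le_rpow (norm_nonneg _) hβ hq0.le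
    linarith
  have hbabs : ∀ x, |b x| ≤ 2 * (P * R) + 2 * (C0 * (1 + R ^ q' + R ^ q')) := by
    intro x
    have e1 : |⟪pseq n x, αl x⟫_ℝ| ≤ P * R :=
      le_trans (abs_real_inner_le_norm _ _)
        (mul_le_mul (h1 x) (hαlb x) (norm_nonneg _) hP)
    have e2 : |⟪pseq n x, αn x⟫_ℝ| ≤ P * R :=
      le_trans (abs_real_inner_le_norm _ _)
        (mul_le_mul (h1 x) (hαnb x) (norm_nonneg _) hP)
    have e3 := hLbn x (αl x) (hαlb x)
    have e4 := hLbn x (αn x) (hαnb x)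
    rw [hbdef]
    simp only
    rw [abs_le] at e1 e2 e3 e4 ⊢
    constructor <;> linarith [e1.1, e1.2, e2.1, e2.2, e3.1, e3.2, e4.1, e4.2]
  have hbint : MeasureTheory.Integrable b (mseq n : MeasureTheory.Measure (Tor d a)) :=
    comp_pair_integrable hαnae hBc hbabs
  -- pointwise lower bound for b
  have hJdiff : ∀ (x : Tor d a) (β : E d), ‖β‖ ≤ R →
      |(-⟪pseq n x, β⟫_ℝ - L (tseq n) x β (σ n)) - (-⟪p x, β⟫_ℝ - L t x β μ)| ≤ ε'/2 := by
    intro x β hβ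
    have e1 : |⟪p x, β⟫_ℝ - ⟪pseq n x, β⟫_ℝ| ≤ ε'/4 := by
      rw [← inner_sub_left]
      refine le_trans (abs_real_inner_le_norm _ _) ?_
      have e2 : ‖p x - pseq n x‖ ≤ ε'/(4*R) := by
        have := h3 x; rw [dist_eq_norm] at this; linarith
      calc ‖p x - pseq n x‖ * ‖β‖ ≤ (ε'/(4*R)) * R :=
            mul_le_mul e2 hβ (norm_nonneg _) (by positivity)
        _ = ε'/4 := by field_simp
    have e3 : |L (tseq n) x β (σ n) - L t x β μ| ≤ ε'/4 := h2 x β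
      (by rw [Metric.mem_closedBall, dist_zero_right]; exact hβ)
    have e4 : (-⟪pseq n x, β⟫_ℝ - L (tseq n) x β (σ n)) - (-⟪p x, β⟫_ℝ - L t x β μ)
        = (⟪p x, β⟫_ℝ - ⟪pseq n x, β⟫_ℝ) - (L (tseq n) x β (σ n) - L t x β μ) := by ring
    rw [e4]
    rw [abs_le] at e1 e3 ⊢
    constructor <;> linarith [e1.1, e1.2, e3.1, e3.2]
  have hble : ∀ x, -ε' ≤ b x := by
    intro x
    have hJl := hJdiff x (αl x) (hαlb x)
    have hJn := hJdiff x (αn x) (hαnb x)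
    have hmax := (hA2 t x (p x) μ).1 (αn x)
    rw [abs_le] at hJl hJn
    rw [hbdef]
    simp only
    have : -⟪p x, αn x⟫_ℝ - L t x (αn x) μ
        ≤ -⟪p x, αl x⟫_ℝ - L t x (αl x) μ := hmax
    linarith [hJl.1, hJl.2, hJn.1, hJn.2]
  -- pointwise estimate for the difference of test values
  have hpt : ∀ x, |f (x, αn x) - f (x, αl x)|
      ≤ η/4 + ((2*Bf+2)/δ) * (b x + ε') := by
    intro x
    by_cases hbx : b x ≤ δ
    · have hclose := h4 x (αn x)
        (by rw [Metric.mem_closedBall, dist_zero_right]; exact hαnb x) hbx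
      have e1 : |f (x, αn x) - f (x, αl x)| ≤ η/4 :=
        hmodf x (αn x) (αl x) (hαnb x) (hαlb x) hclose
      have e2 : 0 ≤ ((2*Bf+2)/δ) * (b x + ε') := by
        apply mul_nonneg (by positivity)
        linarith [hble x]
      linarith
    · push_neg at hbx
      have e1 : |f (x, αn x) - f (x, αl x)| ≤ 2*Bf := by
        calc |f (x, αn x) - f (x, αl x)| ≤ |f (x, αn x)| + |f (x, αl x)| := abs_sub _ _
          _ ≤ 2*Bf := by linarith [hfb (x, αn x), hfb (x, αl x)]
      have e2 : (2*Bf+2) ≤ ((2*Bf+2)/δ) * (b x + ε') := by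
        have e3 : δ ≤ b x + ε' := by linarith [hε']
        calc (2*Bf+2) = ((2*Bf+2)/δ) * δ := by field_simp
          _ ≤ ((2*Bf+2)/δ) * (b x + ε') :=
              mul_le_mul_of_nonneg_left e3 (by positivity)
      linarith
  -- integrate the pointwise estimate
  have hfn_int : MeasureTheory.Integrable (fun x => f (x, αn x))
      (mseq n : MeasureTheory.Measure (Tor d a)) :=
    comp_pair_integrable hαnae f.continuous (fun x => hfb _)
  have hfl_int : MeasureTheory.Integrable (fun x => f (x, αl x))
      (mseq n : MeasureTheory.Measure (Tor d a)) :=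
    comp_pair_integrable hαlc.measurable.aemeasurable f.continuous (fun x => hfb _)
  have hAn : ∫ z, f z ∂(μseq n : MeasureTheory.Measure (Tor d a × E d))
      = ∫ x, f (x, αn x) ∂(mseq n : MeasureTheory.Measure (Tor d a)) := by
    rw [show ((μseq n : MeasureTheory.Measure (Tor d a × E d)))
      = (mseq n : MeasureTheory.Measure (Tor d a)).map (fun x => (x, αn x)) from hμseq n]
    exact integral_map_pair hαnae f.continuous.aestronglyMeasurable
  have hdiff_int : MeasureTheory.Integrable (fun x => |f (x, αn x) - f (x, αl x)|)
      (mseq n : MeasureTheory.Measure (Tor d a)) := (hfn_int.sub hfl_int).abs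
  have hrhs1 : MeasureTheory.Integrable (fun x => b x + ε')
      (mseq n : MeasureTheory.Measure (Tor d a)) :=
    hbint.add (MeasureTheory.integrable_const _)
  have hrhs2 : MeasureTheory.Integrable (fun x => ((2*Bf+2)/δ) * (b x + ε'))
      (mseq n : MeasureTheory.Measure (Tor d a)) := hrhs1.const_mul _
  have hrhs : MeasureTheory.Integrable (fun x => η/4 + ((2*Bf+2)/δ) * (b x + ε'))
      (mseq n : MeasureTheory.Measure (Tor d a)) :=
    (MeasureTheory.integrable_const _).add hrhs2
  have h6 : ∫ x, |f (x, αn x) - f (x, αl x)| ∂(mseq n : MeasureTheory.Measure (Tor d a))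
      ≤ η/4 + ((2*Bf+2)/δ)
        * ((∫ x, b x ∂(mseq n : MeasureTheory.Measure (Tor d a))) + ε') := by
    have h7 := MeasureTheory.integral_mono hdiff_int hrhs hpt
    have h8 : ∫ x, (η/4 + ((2*Bf+2)/δ) * (b x + ε'))
          ∂(mseq n : MeasureTheory.Measure (Tor d a))
        = η/4 + ((2*Bf+2)/δ)
          * ((∫ x, b x ∂(mseq n : MeasureTheory.Measure (Tor d a))) + ε') := by
      rw [MeasureTheory.integral_add (MeasureTheory.integrable_const _) hrhs2,
        MeasureTheory.integral_const_mul,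
        MeasureTheory.integral_add hbint (MeasureTheory.integrable_const _),
        MeasureTheory.integral_const, MeasureTheory.integral_const]
      simp only [MeasureTheory.measure_univ, MeasureTheory.probReal_univ, one_smul]
    rw [h8] at h7
    exact h7
  have h9 : |(∫ x, f (x, αn x) ∂(mseq n : MeasureTheory.Measure (Tor d a)))
      - ∫ x, f (x, αl x) ∂(mseq n : MeasureTheory.Measure (Tor d a))|
      ≤ ∫ x, |f (x, αn x) - f (x, αl x)|
        ∂(mseq n : MeasureTheory.Measure (Tor d a)) := by
    rw [← MeasureTheory.integral_sub hfn_int hfl_int]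
    have := MeasureTheory.norm_integral_le_integral_norm
      (μ := (mseq n : MeasureTheory.Measure (Tor d a)))
      (f := fun x => f (x, αn x) - f (x, αl x))
    simpa only [Real.norm_eq_abs] using this
  have h10 : ((2*Bf+2)/δ)
      * ((∫ x, b x ∂(mseq n : MeasureTheory.Measure (Tor d a))) + ε')
      ≤ ((2*Bf+2)/δ) * ε' :=
    mul_le_mul_of_nonneg_left (by linarith [hbint_le]) (by positivity)
  have hcoeff : ((2*Bf+2)/δ) * ε' = η/4 := by
    rw [hε'def]
    field_simp
    ring
  have h11 : |(∫ x, f (x, αn x) ∂(mseq n : MeasureTheory.Measure (Tor d a)))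
      - ∫ x, f (x, αl x) ∂(mseq n : MeasureTheory.Measure (Tor d a))| ≤ η/2 := by
    have h12 := le_trans h9 h6
    linarith [h10, hcoeff]
  rw [Real.dist_eq, hAn, hμint]
  rw [Real.dist_eq] at h5
  have htri := abs_sub_le
    (∫ x, f (x, αn x) ∂(mseq n : MeasureTheory.Measure (Tor d a)))
    (∫ x, f (x, αl x) ∂(mseq n : MeasureTheory.Measure (Tor d a)))
    (∫ x, f (x, αl x) ∂(m : MeasureTheory.Measure (Tor d a)))
  calc |(∫ x, f (x, αn x) ∂(mseq n : MeasureTheory.Measure (Tor d a)))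
      - ∫ x, f (x, αl x) ∂(m : MeasureTheory.Measure (Tor d a))| ≤ _ := htri
    _ < η := by linarith [h11, h5]
end
end
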